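/- arXiv:math/0101262 — 9 statements merged into one kernel-verified Lean document; each statement's English description precedes it below -/
import Mathlib

section
/- Let m ≥ 1 and let S ⊆ Δ_m be nonempty and contain at least one point (t_0,…,t_m) with max_i t_i < 1. Let U be a convex open subset of ℝ^d and let h : U → ℝ be Lebesgue measurable and S-almost convex. Then h is bounded above and bounded below on every compact subset of U. -/
open scoped BigOperators

/-- `h` is `S`-almost convex on the convex set `C`. -/
def SAlmostConvex {V : Type*} [AddCommGroup V] [Module ℝ V] {m : ℕ}
    (S : Set (Fin (m + 1) → ℝ)) (C : Set V) (h : V → ℝ) : Prop :=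
  ∀ t ∈ S, ∀ x : Fin (m + 1) → V, (∀ i, x i ∈ C) →
    h (∑ i, t i • x i) ≤ 1 + ∑ i, t i * h (x i)

/-!
Take a point of `S` with all coordinates `< 1` and a coordinate `α ∈ (0, 1)` of it; putting `y`
in that slot and `x` in all others shows `h ((1 - α) x + α y) ≤ 1 + (1 - α) h x + α h y`.

Near `z ∈ U`, measurability gives a level `M` above which `h` lives only on a set `N` of tiny
measure in a ball around `z`. For `w` close to `z`, the homothety `φ` with centre `w` and ratio
`-(1 - α) / α` satisfies `(1 - α) x + α φ x = w` and multiplies measure by a fixed factor, so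
`N ∪ φ⁻¹ N` cannot cover a small ball around `z`; a point `x` outside it gives `h w ≤ 1 + M`.
Writing `z` as a combination of `x` and the image of `x` under a homothety centred at `z` turns
this local upper bound into a local lower bound, and compactness does the rest.
-/

open MeasureTheory Set Filter Topology Bornology Metric
open scoped ENNReal

lemma sum_smul_update_const {M : Type*} [AddCommGroup M] [Module ℝ M] {ι : Type*}
    [Fintype ι] [DecidableEq ι] {t : ι → ℝ} (ht : ∑ i, t i = 1) (j : ι) (x y : M) :
    ∑ i, t i • Function.update (fun _ => x) j y i = (1 - t j) • x + t j • y := by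
  simp [Function.update_apply, smul_ite, Finset.sum_ite, Finset.filter_ne', Finset.filter_eq',
    ← Finset.sum_smul, Finset.sum_erase_eq_sub, ht, add_comm]

lemma smul_add_smul_homothety {E : Type*} [AddCommGroup E] [Module ℝ E] {a b : ℝ} (hb : b ≠ 0)
    (hab : a + b = 1) (w x : E) : a • x + b • AffineMap.homothety w (-(a / b)) x = w := by
  rw [AffineMap.homothety_apply, vsub_eq_sub, vadd_eq_add, smul_add, smul_smul,
    mul_neg, mul_div_cancel₀ a hb]
  linear_combination (norm := module) hab • w

lemma MeasureTheory.Measure.addHaar_preimage_homothety {E : Type*} [NormedAddCommGroup E]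
    [NormedSpace ℝ E] [MeasurableSpace E] [BorelSpace E] [FiniteDimensional ℝ E]
    (μ : Measure E) [μ.IsAddHaarMeasure] (x : E) {r : ℝ} (hr : r ≠ 0) (s : Set E) :
    μ (AffineMap.homothety x r ⁻¹' s) = ENNReal.ofReal |(r ^ Module.finrank ℝ E)⁻¹| * μ s := by
  have : AffineMap.homothety x r ⁻¹' s = (· + -x) ⁻¹' ((r • ·) ⁻¹' ((· + x) ⁻¹' s)) := by
    ext y
    simp [AffineMap.homothety_apply, sub_eq_add_neg]
  rw [this, measure_preimage_add_right, Measure.addHaar_preimage_smul μ hr,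
    measure_preimage_add_right]

lemma tendsto_measure_inter_preimage_Ioi_atTop {X : Type*} [MeasurableSpace X] {μ : Measure X}
    {s : Set X} (hs : μ s ≠ ∞) {f : X → ℝ} (hf : NullMeasurable f (μ.restrict s)) :
    Tendsto (fun M : ℝ => μ (s ∩ f ⁻¹' Ioi M)) atTop (𝓝 0) := by
  have hlim : Tendsto (fun M : ℝ => μ.restrict s (f ⁻¹' Ioi M)) atTop
      (𝓝 (μ.restrict s (⋂ M : ℝ, f ⁻¹' Ioi M))) :=
    tendsto_measure_iInter_atTop (fun M => hf measurableSet_Ioi)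
      (fun _ _ hMN => preimage_mono (Ioi_subset_Ioi hMN))
      ⟨0, ne_top_of_le_ne_top (by rwa [Measure.restrict_apply_univ])
        (measure_mono (subset_univ _))⟩
  have hempty : ⋂ M : ℝ, f ⁻¹' Ioi M = ∅ :=
    eq_empty_of_forall_notMem fun x hx => lt_irrefl (f x) (mem_iInter.1 hx (f x))
  rw [hempty, measure_empty] at hlim
  refine tendsto_of_tendsto_of_tendsto_of_le_of_le tendsto_const_nhds hlim (fun _ => zero_le)
    fun M => ?_
  simpa only [inter_comm s] using Measure.le_restrict_apply s (f ⁻¹' Ioi M)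

lemma IsCompact.isBounded_image_of_forall_exists_mem_nhds {X Y : Type*} [TopologicalSpace X]
    [Bornology Y] {K : Set X} (hK : IsCompact K) {f : X → Y}
    (hf : ∀ x ∈ K, ∃ t ∈ 𝓝 x, IsBounded (f '' t)) : IsBounded (f '' K) := by
  refine hK.induction_on (p := fun s => IsBounded (f '' s)) (by simp)
    (fun _ _ hst ht => ht.subset (image_mono hst))
    (fun _ _ hs ht => by simpa only [image_union] using hs.union ht) ?_
  intro x hx
  obtain ⟨t, ht, hbdd⟩ := hf x hx
  exact ⟨t, mem_nhdsWithin_of_mem_nhds ht, hbdd⟩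

def AlmostConvexWith {E : Type*} [AddCommGroup E] [Module ℝ E] (α : ℝ) (U : Set E)
    (h : E → ℝ) : Prop :=
  ∀ x ∈ U, ∀ y ∈ U, h ((1 - α) • x + α • y) ≤ 1 + (1 - α) * h x + α * h y

lemma SAlmostConvex.exists_almostConvexWith {V : Type*} [AddCommGroup V] [Module ℝ V] {m : ℕ}
    {S : Set (Fin (m + 1) → ℝ)} {C : Set V} {h : V → ℝ} (hac : SAlmostConvex S C h)
    (hS : S ⊆ stdSimplex ℝ (Fin (m + 1))) (ht : ∃ t ∈ S, ∀ i, t i < 1) :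
    ∃ α, 0 < α ∧ α < 1 ∧ AlmostConvexWith α C h := by
  obtain ⟨t, htS, ht_lt⟩ := ht
  obtain ⟨ht_nonneg, ht_sum⟩ := hS htS
  obtain ⟨j, hj⟩ : ∃ j, t j ≠ 0 := by
    by_contra! hzero
    simp [hzero] at ht_sum
  refine ⟨t j, (ht_nonneg j).lt_of_ne' hj, ht_lt j, fun x hx y hy => ?_⟩
  have key := hac t htS (Function.update (fun _ => x) j y) fun i => by
    rcases eq_or_ne i j with rfl | hij <;> simp [*]
  simp only [Function.apply_update (fun _ => h), ← smul_eq_mul (a := t _),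
    sum_smul_update_const ht_sum] at key
  simpa only [smul_eq_mul, add_assoc] using key

section

variable {E : Type*} [NormedAddCommGroup E] [NormedSpace ℝ E]

lemma homothety_mem_ball {α r : ℝ} (hα0 : 0 < α) (hα1 : α < 1) {z w x : E}
    (hw : w ∈ ball z (α * r / 2)) (hx : x ∈ ball z (α * r / 2)) :
    AffineMap.homothety w (-((1 - α) / α)) x ∈ ball z r := by
  rw [mem_ball] at *
  have hwx : (1 - α) / α * dist w x ≤ (1 - α) * r := by
    rw [div_mul_eq_mul_div, div_le_iff₀ hα0]
    nlinarith [dist_triangle w z x, dist_comm x z]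
  calc dist (AffineMap.homothety w (-((1 - α) / α)) x) z
      ≤ dist (AffineMap.homothety w (-((1 - α) / α)) x) w + dist w z := dist_triangle _ _ _
    _ = (1 - α) / α * dist w x + dist w z := by
      rw [dist_homothety_center, norm_neg, Real.norm_of_nonneg (by bound)]
    _ < r := by nlinarith [dist_nonneg (x := w) (y := z)]

variable {α : ℝ} {U : Set E} {h : E → ℝ} {z : E}

lemma AlmostConvexWith.exists_eventually_ge (hac : AlmostConvexWith α U h) (hα0 : 0 < α)
    (hα1 : α < 1) (hU : IsOpen U) (hz : z ∈ U) {M : ℝ} (hM : ∀ᶠ w in 𝓝 z, h w ≤ M) :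
    ∃ a, ∀ᶠ x in 𝓝 z, a ≤ h x := by
  set ψ := AffineMap.homothety z (-(α / (1 - α)))
  have hψ : Tendsto ψ (𝓝 z) (𝓝 z) := by
    simpa [ψ] using (AffineMap.homothety_continuous z (-(α / (1 - α)))).tendsto z
  refine ⟨(h z - 1 - (1 - α) * M) / α, ?_⟩
  filter_upwards [hψ.eventually hM, hψ.eventually (hU.mem_nhds hz), hU.mem_nhds hz]
    with x hψM hψU hxU
  have hcomb : (1 - α) • ψ x + α • x = z := by
    rw [add_comm]; exact smul_add_smul_homothety (by linarith) (by ring) z x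
  have key := hac (ψ x) hψU x hxU
  rw [hcomb] at key
  rw [div_le_iff₀ hα0]
  linarith [mul_le_mul_of_nonneg_left hψM (by linarith : (0 : ℝ) ≤ 1 - α)]

variable [MeasurableSpace E] [BorelSpace E] [FiniteDimensional ℝ E] {μ : Measure E}
  [μ.IsAddHaarMeasure]

lemma AlmostConvexWith.exists_eventually_le (hac : AlmostConvexWith α U h) (hα0 : 0 < α)
    (hα1 : α < 1) (hU : IsOpen U) (hmeas : NullMeasurable h (μ.restrict U)) (hz : z ∈ U) :
    ∃ M, ∀ᶠ w in 𝓝 z, h w ≤ M := by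
  obtain ⟨r, hr, hrU⟩ := Metric.isOpen_iff.1 hU z hz
  set β := (1 - α) / α
  set δ := α * r / 2
  set c := ENNReal.ofReal |((-β) ^ Module.finrank ℝ E)⁻¹|
  have hδ : 0 < δ := by positivity
  have hδr : δ ≤ r := by simp only [δ]; nlinarith
  obtain ⟨M, hM⟩ : ∃ M : ℝ, (1 + c) * μ (ball z r ∩ h ⁻¹' Ioi M) < μ (ball z δ) := by
    have hmeas_r : NullMeasurable h (μ.restrict (ball z r)) := fun _ ht =>
      (hmeas ht).mono_ac (Measure.absolutelyContinuous_of_le (Measure.restrict_mono_set μ hrU))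
    have := ENNReal.Tendsto.const_mul (tendsto_measure_inter_preimage_Ioi_atTop
      measure_ball_lt_top.ne hmeas_r) (Or.inr (by simp [c] : 1 + c ≠ ∞))
    rw [mul_zero] at this
    exact (this.eventually (gt_mem_nhds (measure_ball_pos μ z hδ))).exists
  refine ⟨1 + M, eventually_of_mem (ball_mem_nhds z hδ) fun w hw => ?_⟩
  set N := ball z r ∩ h ⁻¹' Ioi M
  set φ := AffineMap.homothety w (-β)
  have hφ : ∀ x ∈ ball z δ, φ x ∈ ball z r := fun _ hx => homothety_mem_ball hα0 hα1 hw hx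
  obtain ⟨x, hxδ, hxN⟩ : ∃ x ∈ ball z δ, x ∉ N ∪ φ ⁻¹' N := not_subset.1 fun hsub =>
    hM.not_ge <| calc
      μ (ball z δ) ≤ μ (N ∪ φ ⁻¹' N) := measure_mono hsub
      _ ≤ μ N + μ (φ ⁻¹' N) := measure_union_le _ _
      _ = (1 + c) * μ N := by
        rw [μ.addHaar_preimage_homothety w (neg_ne_zero.2 (div_pos (by linarith) hα0).ne') N]
        ring
  have hxr : x ∈ ball z r := ball_subset_ball hδr hxδ
  have hx : h x ≤ M := by simpa [N, hxr] using (not_or.1 hxN).1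
  have hφx : h (φ x) ≤ M := by simpa [N, hφ x hxδ] using (not_or.1 hxN).2
  have key := hac x (hrU hxr) (φ x) (hrU (hφ x hxδ))
  rw [smul_add_smul_homothety hα0.ne' (by ring)] at key
  linarith [mul_le_mul_of_nonneg_left hx (by linarith : (0 : ℝ) ≤ 1 - α),
    mul_le_mul_of_nonneg_left hφx hα0.le]

lemma AlmostConvexWith.exists_mem_nhds_isBounded_image (hac : AlmostConvexWith α U h) (hα0 : 0 < α)
    (hα1 : α < 1) (hU : IsOpen U) (hmeas : NullMeasurable h (μ.restrict U)) (hz : z ∈ U) :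
    ∃ t ∈ 𝓝 z, IsBounded (h '' t) := by
  obtain ⟨M, hM⟩ := hac.exists_eventually_le hα0 hα1 hU hmeas hz
  obtain ⟨a, ha⟩ := hac.exists_eventually_ge hα0 hα1 hU hz hM
  exact ⟨_, ha.and hM, (Metric.isBounded_Icc a M).subset (image_subset_iff.2 fun x hx => hx)⟩

end

theorem stmt1_general {d : ℕ} {m : ℕ}
    (S : Set (Fin (m + 1) → ℝ))
    (hSsub : S ⊆ stdSimplex ℝ (Fin (m + 1)))
    (hSpt : ∃ t ∈ S, ∀ i, t i < 1)
    (U : Set (Fin d → ℝ)) (hUopen : IsOpen U)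
    (h : (Fin d → ℝ) → ℝ)
    (hmeas : MeasureTheory.NullMeasurable h
      (MeasureTheory.volume.restrict U))
    (hac : SAlmostConvex S U h) :
    ∀ K ⊆ U, IsCompact K → ∃ a b : ℝ, ∀ x ∈ K, a ≤ h x ∧ h x ≤ b := by
  intro K hKU hK
  obtain ⟨α, hα0, hα1, hα⟩ := hac.exists_almostConvexWith hSsub hSpt
  obtain ⟨C, hC⟩ := isBounded_iff_forall_norm_le.1 <|
    hK.isBounded_image_of_forall_exists_mem_nhds fun z hz =>
      hα.exists_mem_nhds_isBounded_image hα0 hα1 hUopen hmeas (hKU hz)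
  exact ⟨-C, C, fun x hx => abs_le.1 (hC _ (mem_image_of_mem h hx))⟩

theorem stmt1 {d : ℕ} {m : ℕ} (hm : 1 ≤ m)
    (S : Set (Fin (m + 1) → ℝ)) (hSne : S.Nonempty)
    (hSsub : S ⊆ stdSimplex ℝ (Fin (m + 1)))
    (hSpt : ∃ t ∈ S, ∀ i, t i < 1)
    (U : Set (Fin d → ℝ)) (hUconv : Convex ℝ U) (hUopen : IsOpen U)
    (h : (Fin d → ℝ) → ℝ)
    (hmeas : MeasureTheory.NullMeasurable h
      (MeasureTheory.volume.restrict U))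
    (hac : SAlmostConvex S U h) :
    ∀ K ⊆ U, IsCompact K → ∃ a b : ℝ, ∀ x ∈ K, a ≤ h x ∧ h x ≤ b :=
  stmt1_general S hSsub hSpt U hUopen h hmeas hac
end

section
/- Let a < b be real numbers and let α, β > 0 with α + β = 1. If h : [a,b] → ℝ is Lebesgue measurable and satisfies h(αx + βy) ≤ 1 + αh(x) + βh(y) for all x, y ∈ [a,b], then h is bounded above on [a,b]. -/
/-!
Measurability gives a level `C` such that `h ≤ C` outside a set of measure less than
`α β² (b - a)`. For `t` in the middle interval `[a + ρ, b - ρ]`, `ρ = β (b - a) / 2`, the pairs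
`(x, y)` with `α x + β y = t` and `|x - t| ≤ β ρ` stay in `[a, b]` and are too many to be covered by
the bad set, so `h t ≤ 1 + C`. The inequality with `x` an endpoint `p` says that the sublevel set
`{h ≤ K}` is invariant under the homothety `y ↦ α p + β y` once `K` is large, and iterating these
two homotheties carries the middle interval onto all of `[a, b]`.
-/

open MeasureTheory Set Filter Topology

theorem MeasureTheory.NullMeasurable.tendsto_measure_setOf_lt_atTop {X : Type*}
    [MeasurableSpace X] {μ : Measure X} [IsFiniteMeasure μ] {f : X → ℝ}
    (hf : NullMeasurable f μ) :
    Tendsto (fun C : ℝ ↦ μ {x | C < f x}) atTop (𝓝 0) := by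
  have hempty : ⋂ C : ℝ, {x | C < f x} = ∅ :=
    eq_empty_of_forall_notMem fun x hx ↦ lt_irrefl (f x) (mem_iInter.1 hx (f x))
  have hlim := tendsto_measure_iInter_atTop (μ := μ) (s := fun C : ℝ ↦ {x | C < f x})
    (fun C ↦ hf measurableSet_Ioi) (fun C D hCD x (hx : D < f x) ↦ hCD.trans_lt hx)
    ⟨0, measure_ne_top μ _⟩
  rwa [hempty, measure_empty] at hlim

theorem Real.volume_preimage_mul_add {p : ℝ} (hp : p ≠ 0) (q : ℝ) (s : Set ℝ) :
    volume ((fun x ↦ p * x + q) ⁻¹' s) = ENNReal.ofReal |p⁻¹| * volume s := by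
  change volume ((p * ·) ⁻¹' ((· + q) ⁻¹' s)) = _
  rw [Real.volume_preimage_mul_left hp, measure_preimage_add_right]

theorem Ioc_subset_of_mapsTo_homothety {T : Set ℝ} {β a c d : ℝ} (hβ : 0 < β) (hβ1 : β < 1)
    (hT : MapsTo (fun x ↦ a + β * (x - a)) T T) (hac : a < c) (hcd : c - a ≤ β * (d - a))
    (hcdT : Icc c d ⊆ T) : Ioc a d ⊆ T := by
  have hiter : ∀ n : ℕ, Icc (a + β ^ n * (c - a)) d ⊆ T := by
    intro n
    induction n with
    | zero => simpa using hcdT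
    | succ n ih =>
      rintro t ⟨hta, htd⟩
      by_cases hnear : a + β ^ n * (c - a) ≤ t
      · exact ih ⟨hnear, htd⟩
      have hpow : β ^ n ≤ 1 := pow_le_one₀ hβ.le hβ1.le
      have ht_eq : a + β * (a + (t - a) / β - a) = t := by field_simp; ring
      rw [← ht_eq]
      refine hT (ih ⟨?_, ?_⟩)
      · rw [add_le_add_iff_left, le_div_iff₀ hβ]
        linarith [show β ^ (n + 1) * (c - a) = β ^ n * (c - a) * β by ring]
      · rw [← le_sub_iff_add_le', div_le_iff₀ hβ]
        nlinarith
  rintro x ⟨hax, hxd⟩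
  obtain ⟨n, hn⟩ := exists_pow_lt_of_lt_one (div_pos (sub_pos.2 hax) (sub_pos.2 hac)) hβ1
  rw [lt_div_iff₀ (sub_pos.2 hac)] at hn
  exact hiter n ⟨by linarith, hxd⟩

theorem Ico_subset_of_mapsTo_homothety {T : Set ℝ} {β b c d : ℝ} (hβ : 0 < β) (hβ1 : β < 1)
    (hT : MapsTo (fun x ↦ b + β * (x - b)) T T) (hdb : d < b) (hbd : b - d ≤ β * (b - c))
    (hcdT : Icc c d ⊆ T) : Ico c b ⊆ T := by
  have hneg : Ioc (-b) (-c) ⊆ Neg.neg ⁻¹' T := by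
    refine Ioc_subset_of_mapsTo_homothety hβ hβ1 (fun x hx ↦ ?_) (neg_lt_neg hdb)
      (by linarith) fun x hx ↦ hcdT ⟨by linarith [hx.2], by linarith [hx.1]⟩
    have : -(-b + β * (x - -b)) = b + β * (-x - b) := by ring
    simpa only [mem_preimage, this] using hT hx
  exact fun x hx ↦ by simpa using hneg ⟨neg_lt_neg hx.2, neg_le_neg hx.1⟩

theorem le_one_add_of_restrict_setOf_lt {a b α β C ρ t : ℝ} {h : ℝ → ℝ} (hα : 0 < α)
    (hβ : 0 < β) (hαβ : α + β = 1)
    (hconv : ∀ x ∈ Icc a b, ∀ y ∈ Icc a b, h (α * x + β * y) ≤ 1 + α * h x + β * h y)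
    (hρ : 0 < ρ) (hta : a + ρ ≤ t) (htb : t ≤ b - ρ)
    (hbad : volume.restrict (Icc a b) {x | C < h x} < ENNReal.ofReal (2 * α * β * ρ)) :
    h t ≤ 1 + C := by
  rw [Measure.restrict_apply' measurableSet_Icc] at hbad
  set B := {x | C < h x} ∩ Icc a b
  -- `φ x` is the unique `y` with `α * x + β * y = t`
  set φ : ℝ → ℝ := fun x ↦ -(α / β) * x + t / β
  have hsmall : volume B + volume (φ ⁻¹' B) < volume (Icc (t - β * ρ) (t + β * ρ)) := by
    have hφB : volume (φ ⁻¹' B) ≤ ENNReal.ofReal (β / α * (2 * α * β * ρ)) := by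
      rw [Real.volume_preimage_mul_add (neg_ne_zero.2 (div_pos hα hβ).ne'), inv_neg, abs_neg,
        inv_div, abs_of_pos (by positivity), ENNReal.ofReal_mul (by positivity)]
      gcongr
    calc volume B + volume (φ ⁻¹' B)
        < ENNReal.ofReal (2 * α * β * ρ) + ENNReal.ofReal (β / α * (2 * α * β * ρ)) :=
          ENNReal.add_lt_add_of_lt_of_le (hφB.trans_lt ENNReal.ofReal_lt_top).ne hbad hφB
      _ = volume (Icc (t - β * ρ) (t + β * ρ)) := by
          rw [← ENNReal.ofReal_add (by positivity) (by positivity), Real.volume_Icc]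
          congr 1
          field_simp
          linear_combination 2 * β * ρ * hαβ
  obtain ⟨x, hx, hxB, hφxB⟩ : ∃ x ∈ Icc (t - β * ρ) (t + β * ρ), x ∉ B ∧ φ x ∉ B := by
    by_contra! hcover
    exact hsmall.not_ge <| (measure_mono fun x hx ↦ by
      by_cases hxB : x ∈ B
      exacts [Or.inl hxB, Or.inr (hcover x hx hxB)]).trans (measure_union_le B (φ ⁻¹' B))
  have hxt : α * x + β * φ x = t := by simp only [φ]; field_simp; ring
  have hxab : x ∈ Icc a b := ⟨by nlinarith [hx.1], by nlinarith [hx.2]⟩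
  have hφxab : φ x ∈ Icc a b := by
    have : β * (φ x - t) = α * (t - x) := by linear_combination hxt - t * hαβ
    constructor <;> nlinarith [hx.1, hx.2]
  have hxC : h x ≤ C := not_lt.1 fun hlt ↦ hxB ⟨hlt, hxab⟩
  have hφxC : h (φ x) ≤ C := not_lt.1 fun hlt ↦ hφxB ⟨hlt, hφxab⟩
  calc h t = h (α * x + β * φ x) := by rw [hxt]
    _ ≤ 1 + α * h x + β * h (φ x) := hconv x hxab (φ x) hφxab
    _ ≤ 1 + α * C + β * C := by gcongr
    _ = 1 + C := by linear_combination C * hαβ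

theorem exists_forall_le_of_le_on_Icc {a b α β c d K₀ : ℝ} {h : ℝ → ℝ} (hα : 0 < α)
    (hβ : 0 < β) (hαβ : α + β = 1)
    (hconv : ∀ x ∈ Icc a b, ∀ y ∈ Icc a b, h (α * x + β * y) ≤ 1 + α * h x + β * h y)
    (hac : a < c) (hca : c - a ≤ β * (d - a)) (hdb : d < b) (hbd : b - d ≤ β * (b - c))
    (hK₀ : ∀ t ∈ Icc c d, h t ≤ K₀) :
    ∃ M, ∀ x ∈ Icc a b, h x ≤ M := by
  have hβ1 : β < 1 := by linarith
  set K := max K₀ (max (h a) (h b) + α⁻¹)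
  set T := {t ∈ Icc a b | h t ≤ K}
  have hcd : c < d := by nlinarith
  have hab : a ≤ b := by linarith
  -- `1 + α * h p + β * K ≤ K` as soon as `h p + α⁻¹ ≤ K`
  have hmaps : ∀ p ∈ Icc a b, h p + α⁻¹ ≤ K → MapsTo (fun x ↦ p + β * (x - p)) T T := by
    rintro p hp hpK x ⟨hx, hxK⟩
    have hcomb : p + β * (x - p) = α * p + β * x := by linear_combination (-p) * hαβ
    show p + β * (x - p) ∈ T
    rw [hcomb]
    refine ⟨⟨by nlinarith [hp.1, hx.1], by nlinarith [hp.2, hx.2]⟩, ?_⟩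
    calc h (α * p + β * x) ≤ 1 + α * h p + β * h x := hconv p hp x hx
      _ ≤ 1 + α * (K - α⁻¹) + β * K := by gcongr; linarith
      _ = K := by field_simp; linear_combination K * hαβ
  have haK : h a + α⁻¹ ≤ K := le_max_of_le_right (by gcongr; exact le_max_left _ _)
  have hbK : h b + α⁻¹ ≤ K := le_max_of_le_right (by gcongr; exact le_max_right _ _)
  have hmid : Icc c d ⊆ T := fun t ht ↦
    ⟨⟨by linarith [ht.1], by linarith [ht.2]⟩, (hK₀ t ht).trans (le_max_left _ _)⟩
  have hleft := Ioc_subset_of_mapsTo_homothety hβ hβ1 (hmaps a ⟨le_rfl, hab⟩ haK) hac hca hmid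
  have hright := Ico_subset_of_mapsTo_homothety hβ hβ1 (hmaps b ⟨hab, le_rfl⟩ hbK) hdb hbd hmid
  refine ⟨K, fun x hx ↦ ?_⟩
  rcases hx.1.eq_or_lt with rfl | hax
  · linarith [inv_pos.2 hα]
  rcases hx.2.eq_or_lt with rfl | hxb
  · linarith [inv_pos.2 hα]
  rcases le_or_gt x d with hxd | hdx
  exacts [(hleft ⟨hax, hxd⟩).2, (hright ⟨by linarith, hxb⟩).2]

theorem stmt2 (a b : ℝ) (hab : a < b) (α β : ℝ) (hα : 0 < α) (hβ : 0 < β)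
    (hαβ : α + β = 1) (h : ℝ → ℝ)
    (hmeas : MeasureTheory.NullMeasurable h
      (MeasureTheory.volume.restrict (Set.Icc a b)))
    (hac : ∀ x ∈ Set.Icc a b, ∀ y ∈ Set.Icc a b,
      h (α * x + β * y) ≤ 1 + α * h x + β * h y) :
    ∃ M : ℝ, ∀ x ∈ Set.Icc a b, h x ≤ M := by
  set ρ := β * (b - a) / 2 with hρ_def
  have hρ : 0 < ρ := by have := sub_pos.2 hab; positivity
  have hρβ : ρ ≤ β * (b - a - ρ) := by
    rw [hρ_def]; nlinarith [mul_pos hα (mul_pos hβ (sub_pos.2 hab))]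
  obtain ⟨C, hC⟩ := (hmeas.tendsto_measure_setOf_lt_atTop.eventually_lt_const
    (ENNReal.ofReal_pos.2 (by positivity : 0 < 2 * α * β * ρ))).exists
  exact exists_forall_le_of_le_on_Icc hα hβ hαβ hac (c := a + ρ) (d := b - ρ) (by linarith)
    (by linarith) (by linarith) (by linarith) fun t ht ↦
      le_one_add_of_restrict_setOf_lt hα hβ hαβ hac hρ ht.1 ht.2 hC
end

section
/- Let B ≥ 2 be an integer and n ≥ 1. Define E : Δ_n → ℝ by E(x_0,…,x_n) = ∑_{k=0}^n H_B(x_k). Then E vanishes at each vertex e_k of Δ_n, and E is barycentrically B-almost convex: for all y_0,…,y_{B−1} ∈ Δ_n, E((y_0+⋯+y_{B−1})/B) ≤ 1 + (1/B)(E(y_0)+⋯+E(y_{B−1})). -/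
open scoped BigOperators

/-- `H_B(x) = ∑_{k=0}^∞ {B^k x}/B^k` where `{y}` is the fractional part. -/
noncomputable def HB (B : ℕ) (x : ℝ) : ℝ :=
  ∑' k : ℕ, Int.fract ((B : ℝ) ^ k * x) / (B : ℝ) ^ k

lemma fract_add_le' (a b : ℝ) : Int.fract (a + b) ≤ Int.fract a + Int.fract b := by
  have h : (⌊a⌋ : ℝ) + ⌊b⌋ ≤ a + b := by
    have := Int.floor_le a; have := Int.floor_le b; linarith
  have h2 : (⌊a⌋ + ⌊b⌋ : ℤ) ≤ ⌊a + b⌋ := Int.le_floor.mpr (by push_cast; linarith)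
  have h3 : ((⌊a⌋ : ℝ) + ⌊b⌋ : ℝ) ≤ (⌊a + b⌋ : ℝ) := by exact_mod_cast h2
  simp only [Int.fract]
  linarith

lemma fract_sum_le {ι : Type*} (s : Finset ι) (f : ι → ℝ) :
    Int.fract (∑ i ∈ s, f i) ≤ ∑ i ∈ s, Int.fract (f i) := by
  induction s using Finset.cons_induction with
  | empty => simp
  | cons a s ha ih =>
    rw [Finset.sum_cons, Finset.sum_cons]
    calc Int.fract (f a + ∑ i ∈ s, f i) ≤ Int.fract (f a) + Int.fract (∑ i ∈ s, f i) :=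
          fract_add_le' _ _
      _ ≤ Int.fract (f a) + ∑ i ∈ s, Int.fract (f i) := by linarith

lemma summable_HB (B : ℕ) (hB : 2 ≤ B) (x : ℝ) :
    Summable (fun k : ℕ => Int.fract ((B : ℝ) ^ k * x) / (B : ℝ) ^ k) := by
  have hBpos : (0 : ℝ) < (B : ℝ) := by positivity
  have hB1 : (1 : ℝ) < (B : ℝ) := by exact_mod_cast lt_of_lt_of_le one_lt_two hB
  apply Summable.of_nonneg_of_le
    (fun k => div_nonneg (Int.fract_nonneg _) (by positivity))
    (fun k => ?_)
    (summable_geometric_of_lt_one (by positivity) (by rw [div_lt_one hBpos]; exact hB1)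
      : Summable fun k : ℕ => ((1 : ℝ) / B) ^ k)
  rw [one_div, inv_pow, ← one_div]
  exact div_le_div₀ zero_le_one (Int.fract_lt_one _).le (by positivity) le_rfl

lemma HB_nonneg (B : ℕ) (x : ℝ) : 0 ≤ HB B x :=
  tsum_nonneg fun k => div_nonneg (Int.fract_nonneg _) (by positivity)

lemma HB_sum_le {ι : Type*} (B : ℕ) (hB : 2 ≤ B) (s : Finset ι) (f : ι → ℝ) :
    HB B (∑ i ∈ s, f i) ≤ ∑ i ∈ s, HB B (f i) := by
  unfold HB
  rw [← Summable.tsum_finsetSum (fun i _ => summable_HB B hB (f i))]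
  apply Summable.tsum_le_tsum _ (summable_HB B hB _)
    (summable_sum fun i _ => summable_HB B hB (f i))
  intro k
  rw [Finset.mul_sum, ← Finset.sum_div]
  exact (div_le_div_iff_of_pos_right (by positivity)).mpr (fract_sum_le s _)

lemma HB_div (B : ℕ) (hB : 2 ≤ B) (x : ℝ) :
    HB B (x / B) = Int.fract (x / B) + HB B x / B := by
  have hBne : (B : ℝ) ≠ 0 := by positivity
  unfold HB
  rw [Summable.tsum_eq_zero_add (summable_HB B hB (x / B))]
  simp only [pow_zero, one_mul, div_one]
  congr 1
  have key : ∀ k : ℕ, Int.fract ((B : ℝ) ^ (k + 1) * (x / B)) / (B : ℝ) ^ (k + 1)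
      = (Int.fract ((B : ℝ) ^ k * x) / (B : ℝ) ^ k) / B := by
    intro k
    have h1 : (B : ℝ) ^ (k + 1) * (x / B) = (B : ℝ) ^ k * x := by
      field_simp
      ring
    rw [h1, pow_succ, ← div_div]
  rw [tsum_congr key, tsum_div_const]

lemma HB_natCast (B : ℕ) (m : ℕ) : HB B (m : ℝ) = 0 := by
  unfold HB
  convert tsum_zero with k
  have : ((B : ℝ) ^ k * m) = ((B ^ k * m : ℕ) : ℝ) := by push_cast; ring
  rw [this, Int.fract_natCast]
  simp

theorem stmt3 (B n : ℕ) (hB : 2 ≤ B) (hn : 1 ≤ n) :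
    (∀ k : Fin (n + 1),
      (∑ j : Fin (n + 1), HB B (if j = k then (1 : ℝ) else 0)) = 0) ∧
    (∀ y : Fin B → (Fin (n + 1) → ℝ), (∀ i, y i ∈ stdSimplex ℝ (Fin (n + 1))) →
      (∑ j : Fin (n + 1), HB B ((∑ i, y i j) / (B : ℝ))) ≤
        1 + (1 / (B : ℝ)) * ∑ i, ∑ j : Fin (n + 1), HB B (y i j)) := by
  have hBpos : (0 : ℝ) < (B : ℝ) := by
    have : (0:ℕ) < B := by omega
    exact_mod_cast this
  constructor
  · intro k
    apply Finset.sum_eq_zero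
    intro j _
    split_ifs
    · exact_mod_cast HB_natCast B 1
    · exact_mod_cast HB_natCast B 0
  · intro y hy
    set s : Fin (n + 1) → ℝ := fun j => ∑ i, y i j with hs
    have hs_nonneg : ∀ j, 0 ≤ s j := fun j => Finset.sum_nonneg fun i _ => (hy i).1 j
    have hs_sum : ∑ j, s j = (B : ℝ) := by
      rw [Finset.sum_comm]
      rw [Finset.sum_congr rfl fun i _ => (hy i).2]
      simp
    calc ∑ j : Fin (n + 1), HB B (s j / B)
        = ∑ j : Fin (n + 1), (Int.fract (s j / B) + HB B (s j) / B) :=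
          Finset.sum_congr rfl fun j _ => HB_div B hB (s j)
      _ = (∑ j : Fin (n + 1), Int.fract (s j / B)) + ∑ j : Fin (n + 1), HB B (s j) / B :=
          Finset.sum_add_distrib
      _ ≤ 1 + (1 / (B : ℝ)) * ∑ i, ∑ j : Fin (n + 1), HB B (y i j) := by
          gcongr ?_ + ?_
          · calc ∑ j : Fin (n + 1), Int.fract (s j / B)
                ≤ ∑ j : Fin (n + 1), s j / B := by
                  apply Finset.sum_le_sum
                  intro j _
                  have h0 : (0:ℝ) ≤ s j / B := div_nonneg (hs_nonneg j) hBpos.le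
                  have : (0:ℤ) ≤ ⌊s j / B⌋ := Int.floor_nonneg.mpr h0
                  have : (0:ℝ) ≤ (⌊s j / B⌋ : ℝ) := by exact_mod_cast this
                  simp only [Int.fract]; linarith
              _ = 1 := by rw [← Finset.sum_div, hs_sum, div_self hBpos.ne']
          · calc ∑ j : Fin (n + 1), HB B (s j) / B
                ≤ ∑ j : Fin (n + 1), (∑ i, HB B (y i j)) / B := by
                  apply Finset.sum_le_sum
                  intro j _
                  gcongr
                  exact HB_sum_le B hB _ _
              _ = (1 / (B : ℝ)) * ∑ i, ∑ j : Fin (n + 1), HB B (y i j) := by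
                  rw [← Finset.sum_div, Finset.sum_comm]
                  ring
end

section
/- Let B ≥ 2 be an integer and n ≥ 1. Then sup_{(x_0,…,x_n) ∈ Δ_n} ∑_{k=0}^n H_B(x_k) = ⌊log_B n⌋ + 1 + n/((B−1)·B^{⌊log_B n⌋}). -/
open scoped BigOperators

/-!
Write `S_k(x) = ∑ᵢ {B^k xᵢ}`, so that `∑ᵢ H_B(xᵢ) = ∑_k S_k(x) / B^k`. On the simplex
`S_k(x) = B^k - ∑ᵢ ⌊B^k xᵢ⌋` is an integer, at most `B^k` and less than `n + 1`, so the `k`-th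
term is at most `min 1 (n / B^k)`; with `d = ⌊log_B n⌋` these bounds add up to
`d + 1 + n / ((B - 1) B^d)`.

Conversely, split `B^(d+1) = c₁ + ⋯ + cₙ` with `1 ≤ cⱼ ≤ B` and take `xⱼ = cⱼ / B^(d+1) - B^(-K)`,
`x₀ = n B^(-K)`. Every coordinate is below `B^(-d)`, so `S_k = B^k` for `k ≤ d`, while for
`d < k ≤ K` each `{B^k xⱼ} = 1 - B^(k-K)`. The value is therefore within `n K / B^K` of the bound,
which tends to `0` as `K → ∞`.
-/

open Finset

section

variable {ι : Type*} [Fintype ι] {B : ℕ}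

lemma hasSum_HB (hB : 1 < B) (x : ℝ) :
    HasSum (fun k : ℕ => Int.fract ((B : ℝ) ^ k * x) / (B : ℝ) ^ k) (HB B x) := by
  have hB' : (1 : ℝ) < B := by exact_mod_cast hB
  refine (Summable.of_nonneg_of_le (fun k => div_nonneg (Int.fract_nonneg _) (by positivity))
    (fun k => ?_) (summable_geometric_of_lt_one (by positivity) (inv_lt_one_of_one_lt₀ hB'))).hasSum
  rw [inv_pow, ← one_div]
  exact div_le_div_of_nonneg_right (Int.fract_lt_one _).le (by positivity)

lemma hasSum_sum_HB (hB : 1 < B) (x : ι → ℝ) :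
    HasSum (fun k : ℕ => (∑ i, Int.fract ((B : ℝ) ^ k * x i)) / (B : ℝ) ^ k)
      (∑ i, HB B (x i)) := by
  simp_rw [sum_div]
  exact hasSum_sum fun i _ => hasSum_HB hB (x i)

lemma sum_fract_mul_eq {x : ι → ℝ} (hx : x ∈ stdSimplex ℝ ι) (m : ℝ) :
    ∑ i, Int.fract (m * x i) = m - ∑ i, (⌊m * x i⌋ : ℝ) := by
  simp only [Int.fract, sum_sub_distrib, ← mul_sum, hx.2, mul_one]

lemma sum_fract_mul_le {x : ι → ℝ} (hx : x ∈ stdSimplex ℝ ι) {m : ℝ} (hm : 0 ≤ m) :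
    ∑ i, Int.fract (m * x i) ≤ m := by
  rw [sum_fract_mul_eq hx]
  have hfloor (i : ι) : (0 : ℝ) ≤ ⌊m * x i⌋ := by
    exact_mod_cast Int.floor_nonneg.2 (mul_nonneg hm (hx.1 i))
  linarith [sum_nonneg fun i (_ : i ∈ univ) => hfloor i]

lemma sum_fract_natCast_mul_add_one_le {x : ι → ℝ} (hx : x ∈ stdSimplex ℝ ι) (m : ℕ) :
    ∑ i, Int.fract (m * x i) + 1 ≤ Fintype.card ι := by
  have hlt : ∑ i, Int.fract (m * x i) < Fintype.card ι := by
    have hne : (univ : Finset ι).Nonempty := by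
      by_contra h
      simpa [not_nonempty_iff_eq_empty.1 h] using hx.2
    simpa using sum_lt_sum_of_nonempty hne fun i _ => Int.fract_lt_one (m * x i)
  rw [sum_fract_mul_eq hx] at hlt ⊢
  exact_mod_cast (show (m - ∑ i, ⌊m * x i⌋ : ℤ) < Fintype.card ι by exact_mod_cast hlt)

lemma sum_fract_mul_eq_self {x : ι → ℝ} (hx : x ∈ stdSimplex ℝ ι) {m : ℝ} (hm : 0 ≤ m)
    (hlt : ∀ i, m * x i < 1) : ∑ i, Int.fract (m * x i) = m := by
  rw [sum_congr rfl fun i _ => Int.fract_eq_self.2 ⟨mul_nonneg hm (hx.1 i), hlt i⟩,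
    ← mul_sum, hx.2, mul_one]

lemma fract_intCast_sub {t : ℝ} (ht : 0 < t) (ht' : t ≤ 1) (z : ℤ) :
    Int.fract (z - t) = 1 - t :=
  Int.fract_eq_iff.2 ⟨by linarith, by linarith, z - 1, by push_cast; ring⟩

lemma exists_fin_sum_eq {B n b : ℕ} (hlo : n ≤ b) (hhi : b ≤ n * B) :
    ∃ c : Fin n → ℕ, (∀ j, 1 ≤ c j ∧ c j ≤ B) ∧ ∑ j, c j = b := by
  induction n generalizing b with
  | zero => exact ⟨Fin.elim0, fun j => j.elim0, by simp; omega⟩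
  | succ n ih =>
    rw [Nat.succ_mul] at hhi
    have hB : 0 < B := Nat.pos_of_ne_zero (by rintro rfl; omega)
    have hnB : n ≤ n * B := Nat.le_mul_of_pos_right n hB
    obtain ⟨m, hm1, hmB, hlo', hhi'⟩ :
        ∃ m, 1 ≤ m ∧ m ≤ B ∧ n + m ≤ b ∧ b ≤ n * B + m := by
      rcases le_total (b - n) B with h | h
      · exact ⟨b - n, by omega, h, by omega, by omega⟩
      · exact ⟨B, hB, le_rfl, by omega, hhi⟩
    obtain ⟨c, hc, hsum⟩ := ih (b := b - m) (by omega) (by omega)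
    refine ⟨Fin.cons m c, fun j => ?_, by rw [Fin.sum_cons, hsum]; omega⟩
    cases j using Fin.cases with
    | zero => exact ⟨hm1, hmB⟩
    | succ j => exact hc j

/-- For `d = Nat.log B n` this is `min 1 (n / B ^ k)`. -/
noncomputable def hbMajorant (B n d k : ℕ) : ℝ := if k ≤ d then 1 else n / (B : ℝ) ^ k

lemma hasSum_hbMajorant (hB : 1 < B) (n d : ℕ) :
    HasSum (hbMajorant B n d) (d + 1 + n / ((B - 1) * (B : ℝ) ^ d)) := by
  have hB' : (1 : ℝ) < B := by exact_mod_cast hB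
  rw [← hasSum_nat_add_iff' (d + 1)]
  have hhead : ∑ k ∈ range (d + 1), hbMajorant B n d k = d + 1 := by
    rw [sum_congr rfl fun k hk =>
      show hbMajorant B n d k = 1 from if_pos (Nat.lt_succ_iff.1 (mem_range.1 hk))]
    simp
  have htail : (fun k => hbMajorant B n d (k + (d + 1))) =
      fun k => n / (B : ℝ) ^ (d + 1) * (B : ℝ)⁻¹ ^ k := by
    funext k
    rw [hbMajorant, if_neg (by omega), pow_add, inv_pow, div_mul_eq_div_div_swap, div_eq_mul_inv]
  have hvalue : (n : ℝ) / ((B - 1) * B ^ d) = n / B ^ (d + 1) * (1 - (B : ℝ)⁻¹)⁻¹ := by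
    have : (B : ℝ) - 1 ≠ 0 := by linarith
    field_simp
    ring
  rw [hhead, htail, add_sub_cancel_left, hvalue]
  exact (hasSum_geometric_of_lt_one (by positivity) (inv_lt_one_of_one_lt₀ hB')).mul_left _

lemma sum_fract_div_pow_le_hbMajorant (hB : 1 < B) (d : ℕ) {n : ℕ} {x : Fin (n + 1) → ℝ}
    (hx : x ∈ stdSimplex ℝ (Fin (n + 1))) (k : ℕ) :
    (∑ i, Int.fract ((B : ℝ) ^ k * x i)) / (B : ℝ) ^ k ≤ hbMajorant B n d k := by
  have hpos : (0 : ℝ) < B ^ k := by positivity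
  unfold hbMajorant
  split_ifs
  · exact (div_le_one hpos).2 (sum_fract_mul_le hx hpos.le)
  · gcongr
    have := sum_fract_natCast_mul_add_one_le hx (B ^ k)
    push_cast at this
    simp only [Fintype.card_fin, Nat.cast_add, Nat.cast_one] at this
    linarith

lemma sum_HB_le (hB : 1 < B) (d : ℕ) {n : ℕ} {x : Fin (n + 1) → ℝ}
    (hx : x ∈ stdSimplex ℝ (Fin (n + 1))) :
    ∑ i, HB B (x i) ≤ d + 1 + n / ((B - 1) * (B : ℝ) ^ d) :=
  hasSum_le (sum_fract_div_pow_le_hbMajorant hB d hx) (hasSum_sum_HB hB x)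
    (hasSum_hbMajorant hB n d)

noncomputable def almostGridPoint (B d K : ℕ) {n : ℕ} (c : Fin n → ℕ) : Fin (n + 1) → ℝ :=
  Fin.cons (n / (B : ℝ) ^ K) fun j => c j / (B : ℝ) ^ (d + 1) - 1 / (B : ℝ) ^ K

section almostGridPoint

variable {d K n : ℕ} {c : Fin n → ℕ}

lemma almostGridPoint_mem_stdSimplex (hB : 0 < B) (hc : ∑ j, c j = B ^ (d + 1))
    (hcB : ∀ j, 1 ≤ c j ∧ c j ≤ B) (hdK : d < K) :
    almostGridPoint B d K c ∈ stdSimplex ℝ (Fin (n + 1)) := by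
  have hB' : (1 : ℝ) ≤ B := by exact_mod_cast hB
  refine ⟨fun i => ?_, ?_⟩
  · cases i using Fin.cases with
    | zero => simp only [almostGridPoint, Fin.cons_zero]; positivity
    | succ j =>
      simp only [almostGridPoint, Fin.cons_succ, sub_nonneg]
      calc 1 / (B : ℝ) ^ K ≤ 1 / (B : ℝ) ^ (d + 1) :=
            one_div_le_one_div_of_le (by positivity) (pow_le_pow_right₀ hB' hdK)
        _ ≤ c j / (B : ℝ) ^ (d + 1) := by gcongr; exact_mod_cast (hcB j).1
  · have hcR : ∑ j, (c j : ℝ) = (B : ℝ) ^ (d + 1) := by exact_mod_cast hc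
    simp only [almostGridPoint, Fin.sum_cons, sum_sub_distrib, ← sum_div, hcR,
      sum_const, card_univ, Fintype.card_fin, nsmul_eq_mul]
    field_simp
    ring

lemma pow_mul_almostGridPoint_lt_one (hB : 0 < B) (hcB : ∀ j, 1 ≤ c j ∧ c j ≤ B)
    (hK : n * B ^ d < B ^ K) (i : Fin (n + 1)) :
    (B : ℝ) ^ d * almostGridPoint B d K c i < 1 := by
  have hK' : (n : ℝ) * B ^ d < B ^ K := by exact_mod_cast hK
  have hBK : (0 : ℝ) < B ^ K := by positivity
  cases i using Fin.cases with
  | zero =>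
    simp only [almostGridPoint, Fin.cons_zero]
    rw [mul_div_assoc', div_lt_one hBK]
    linarith
  | succ j =>
    simp only [almostGridPoint, Fin.cons_succ, mul_sub]
    have hcj : (c j : ℝ) ≤ B := by exact_mod_cast (hcB j).2
    have : (B : ℝ) ^ d * (c j / (B : ℝ) ^ (d + 1)) ≤ 1 := by
      rw [pow_succ, mul_div_assoc', div_le_one (by positivity)]
      gcongr
    have : 0 < (B : ℝ) ^ d * (1 / (B : ℝ) ^ K) := by positivity
    linarith

lemma fract_pow_mul_almostGridPoint_succ (hB : 0 < B) {k : ℕ} (hdk : d < k) (hkK : k ≤ K)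
    (j : Fin n) :
    Int.fract ((B : ℝ) ^ k * almostGridPoint B d K c j.succ) = 1 - (B : ℝ) ^ k / B ^ K := by
  have hB' : (1 : ℝ) ≤ B := by exact_mod_cast hB
  have hgrid : (B : ℝ) ^ k * almostGridPoint B d K c j.succ =
      ((c j * B ^ (k - (d + 1)) : ℕ) : ℤ) - (B : ℝ) ^ k / B ^ K := by
    obtain ⟨m, rfl⟩ : ∃ m, k = m + (d + 1) := ⟨k - (d + 1), by omega⟩
    simp only [almostGridPoint, Fin.cons_succ, Nat.add_sub_cancel]
    push_cast
    rw [pow_add]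
    field_simp
  rw [hgrid, fract_intCast_sub (by positivity) ((div_le_one (by positivity)).2 ?_)]
  exact pow_le_pow_right₀ hB' hkK

lemma hbMajorant_sub_le_sum_fract_div_pow (hB : 1 < B) (hc : ∑ j, c j = B ^ (d + 1))
    (hcB : ∀ j, 1 ≤ c j ∧ c j ≤ B) (hdK : d < K) (hK : n * B ^ d < B ^ K) {k : ℕ}
    (hkK : k < K) :
    hbMajorant B n d k - n / (B : ℝ) ^ K ≤
      (∑ i, Int.fract ((B : ℝ) ^ k * almostGridPoint B d K c i)) / (B : ℝ) ^ k := by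
  have hB0 : 0 < B := by omega
  have hB' : (1 : ℝ) ≤ B := by exact_mod_cast hB.le
  have hBk : (0 : ℝ) < B ^ k := by positivity
  have hmem := almostGridPoint_mem_stdSimplex hB0 hc hcB hdK
  unfold hbMajorant
  split_ifs with hkd
  · have hlt (i : Fin (n + 1)) : (B : ℝ) ^ k * almostGridPoint B d K c i < 1 :=
      (mul_le_mul_of_nonneg_right (pow_le_pow_right₀ hB' hkd) (hmem.1 i)).trans_lt
        (pow_mul_almostGridPoint_lt_one hB0 hcB hK i)
    rw [sum_fract_mul_eq_self hmem hBk.le hlt, div_self hBk.ne']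
    linarith [show (0 : ℝ) ≤ n / (B : ℝ) ^ K by positivity]
  · have hfract (j : Fin n) := fract_pow_mul_almostGridPoint_succ (c := c) hB0
      (not_le.1 hkd) hkK.le j
    rw [Fin.sum_univ_succ, sum_congr rfl fun j _ => hfract j]
    calc (n : ℝ) / B ^ k - n / B ^ K = (∑ _j : Fin n, (1 - (B : ℝ) ^ k / B ^ K)) / B ^ k := by
          simp only [sum_const, card_univ, Fintype.card_fin, nsmul_eq_mul]
          field_simp
      _ ≤ _ := by
          gcongr
          exact le_add_of_nonneg_left (Int.fract_nonneg _)

lemma sum_range_hbMajorant_sub_le_sum_HB (hB : 1 < B) (hc : ∑ j, c j = B ^ (d + 1))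
    (hcB : ∀ j, 1 ≤ c j ∧ c j ≤ B) (hdK : d < K) (hK : n * B ^ d < B ^ K) :
    ∑ k ∈ range K, hbMajorant B n d k - n * K / (B : ℝ) ^ K ≤
      ∑ i, HB B (almostGridPoint B d K c i) :=
  calc ∑ k ∈ range K, hbMajorant B n d k - n * K / (B : ℝ) ^ K
      = ∑ k ∈ range K, (hbMajorant B n d k - n / (B : ℝ) ^ K) := by
        rw [sum_sub_distrib, sum_const, card_range, nsmul_eq_mul]
        ring
    _ ≤ ∑ k ∈ range K,
          (∑ i, Int.fract ((B : ℝ) ^ k * almostGridPoint B d K c i)) / (B : ℝ) ^ k :=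
        sum_le_sum fun k hk =>
          hbMajorant_sub_le_sum_fract_div_pow hB hc hcB hdK hK (mem_range.1 hk)
    _ ≤ _ := sum_le_hasSum (range K) (fun k _ => div_nonneg
          (sum_nonneg fun i _ => Int.fract_nonneg _) (by positivity)) (hasSum_sum_HB hB _)

end almostGridPoint

open Filter Topology in
lemma le_sSup_sum_HB (hB : 1 < B) {n : ℕ} (hn : n ≠ 0) :
    Nat.log B n + 1 + n / ((B - 1) * (B : ℝ) ^ Nat.log B n) ≤
      sSup ((fun x : Fin (n + 1) → ℝ => ∑ k : Fin (n + 1), HB B (x k)) ''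
        stdSimplex ℝ (Fin (n + 1))) := by
  set d := Nat.log B n
  obtain ⟨c, hcB, hc⟩ := exists_fin_sum_eq (n := n) (b := B ^ (d + 1))
    (Nat.lt_pow_succ_log_self hB n).le
    (by rw [pow_succ]; exact Nat.mul_le_mul_right B (Nat.pow_log_le_self B hn))
  have hbdd : BddAbove ((fun x : Fin (n + 1) → ℝ => ∑ k : Fin (n + 1), HB B (x k)) ''
      stdSimplex ℝ (Fin (n + 1))) := by
    refine ⟨d + 1 + n / ((B - 1) * (B : ℝ) ^ d), ?_⟩
    rintro _ ⟨x, hx, rfl⟩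
    exact sum_HB_le hB d hx
  have htend : Tendsto (fun K : ℕ => ∑ k ∈ range K, hbMajorant B n d k - n * K / (B : ℝ) ^ K)
      atTop (𝓝 (d + 1 + n / ((B - 1) * (B : ℝ) ^ d))) := by
    simpa [mul_div_assoc] using (hasSum_hbMajorant hB n d).tendsto_sum_nat.sub
      ((tendsto_pow_const_div_const_pow_of_one_lt 1 (by exact_mod_cast hB)).const_mul (n : ℝ))
  refine le_of_tendsto htend ?_
  filter_upwards [eventually_gt_atTop d,
    (tendsto_pow_atTop_atTop_of_one_lt hB).eventually_gt_atTop (n * B ^ d)] with K hdK hK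
  exact (sum_range_hbMajorant_sub_le_sum_HB hB hc hcB hdK hK).trans
    (le_csSup hbdd ⟨_, almostGridPoint_mem_stdSimplex (by omega) hc hcB hdK, rfl⟩)

end

theorem stmt5 (B n : ℕ) (hB : 2 ≤ B) (hn : 1 ≤ n) :
    sSup ((fun x : Fin (n + 1) → ℝ => ∑ k : Fin (n + 1), HB B (x k)) ''
        stdSimplex ℝ (Fin (n + 1))) =
      (⌊Real.logb B n⌋ : ℝ) + 1 +
        (n : ℝ) / (((B : ℝ) - 1) * (B : ℝ) ^ ⌊Real.logb B n⌋) := by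
  have hfloor : ⌊Real.logb B n⌋ = Nat.log B n := by
    rw [Real.floor_logb_natCast n.cast_nonneg, Int.log_natCast]
  rw [hfloor, zpow_natCast, Int.cast_natCast]
  refine le_antisymm (csSup_le ?_ ?_) (le_sSup_sum_HB hB (by omega))
  · exact ⟨_, _, single_mem_stdSimplex ℝ 0, rfl⟩
  · rintro _ ⟨x, hx, rfl⟩
    exact sum_HB_le hB _ hx
end

section
/- Let B ≥ 2 be an integer and n ≥ 1. Let U ⊆ ℝ^n be a nonempty compact convex set with set of extreme points V, and let h : U → ℝ be bounded above and barycentrically B-almost convex. Then sup_{x ∈ U} h(x) ≤ κ_B(n) + sup_{v ∈ V} h(v). -/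
open scoped BigOperators

/-- `κ_B(n) = ⌊log_B n⌋ + 1 + n/((B−1)·B^⌊log_B n⌋)`. -/
noncomputable def kappa (B n : ℕ) : ℝ :=
  (⌊Real.logb B n⌋ : ℝ) + 1 +
    (n : ℝ) / (((B : ℝ) - 1) * (B : ℝ) ^ ⌊Real.logb B n⌋)

/-!
By Minkowski's and Carathéodory's theorems every point of `U` is a convex combination of at most
`n + 1` extreme points. Laying the weights `λ` out as consecutive intervals of `[0, 1]` and cutting
`[0, 1]` into `B` equal pieces writes `λ` as the average of `B` weight vectors whose supports have
total excess `∑ (#supp - 1)` at most that of `λ`, i.e. at most `n`. Applying almost convexity along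
`K` levels of this splitting, a node at depth `k` costs `1 / B ^ k` unless it is a single vertex,
and at most `min (B ^ k) n` nodes are not; the leaves still left cost at most
`D = sup_U h - sup_V h` each. Hence `D ≤ ∑_{k < K} min 1 (n / B ^ k) + D · min 1 (n / B ^ K)`,
and letting `K → ∞` bounds `D` by the sum of the series, which is at most `κ_B(n)`.
-/

open Finset Module Filter

theorem AffineMap.image_extremePoints_subset_of_injective {𝕜 E F : Type*} [Ring 𝕜]
    [PartialOrder 𝕜] [IsOrderedRing 𝕜] [AddCommGroup E] [Module 𝕜 E] [AddCommGroup F]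
    [Module 𝕜 F] {φ : E →ᵃ[𝕜] F} (hφ : Function.Injective φ) (s : Set E) :
    φ '' s.extremePoints 𝕜 ⊆ (φ '' s).extremePoints 𝕜 := by
  rintro _ ⟨x, hx, rfl⟩
  refine ⟨Set.mem_image_of_mem φ hx.1, ?_⟩
  rintro _ ⟨y, hy, rfl⟩ _ ⟨z, hz, rfl⟩ hxyz
  rw [← image_openSegment, hφ.mem_set_image] at hxyz
  exact congrArg φ (hx.2 hy hz hxyz)

section Minkowski

open Set

variable {E : Type*} [NormedAddCommGroup E] [NormedSpace ℝ E] {U : Set E}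

theorem IsCompact.exists_nonneg_add_smul_mem_diff_interior (hUc : IsCompact U) {x : E}
    (hx : x ∈ U) {v : E} (hv : v ≠ 0) : ∃ t : ℝ, 0 ≤ t ∧ x + t • v ∈ U \ interior U := by
  have hline : Topology.IsClosedEmbedding fun t : ℝ => x + t • v :=
    (Homeomorph.addLeft x).isClosedEmbedding.comp (isClosedEmbedding_smul_left hv)
  have hT : IsCompact (Ici 0 ∩ (fun t : ℝ => x + t • v) ⁻¹' U) :=
    (hline.isCompact_preimage hUc).inter_left isClosed_Ici
  obtain ⟨t, ⟨ht0, htU⟩, hmax⟩ :=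
    hT.exists_isMaxOn ⟨0, mem_Ici.2 le_rfl, by simpa using hx⟩ continuousOn_id
  refine ⟨t, ht0, htU, fun hint => ?_⟩
  have hnear : ∀ᶠ s in nhdsWithin t (Ioi t), x + s • v ∈ interior U :=
    nhdsWithin_le_nhds (hline.continuous.continuousAt.preimage_mem_nhds
      (isOpen_interior.mem_nhds hint))
  obtain ⟨s, hs, hts⟩ := (hnear.and self_mem_nhdsWithin).exists
  exact (hmax ⟨ht0.trans hts.le, (interior_subset hs : x + s • v ∈ U)⟩).not_gt hts

theorem IsCompact.exists_mem_segment_diff_interior [Nontrivial E] (hUc : IsCompact U) {x : E}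
    (hx : x ∈ U) : ∃ p ∈ U \ interior U, ∃ q ∈ U \ interior U, x ∈ segment ℝ p q := by
  obtain ⟨v, hv⟩ := exists_ne (0 : E)
  obtain ⟨a, ha, hp⟩ := hUc.exists_nonneg_add_smul_mem_diff_interior hx (neg_ne_zero.2 hv)
  obtain ⟨b, hb, hq⟩ := hUc.exists_nonneg_add_smul_mem_diff_interior hx hv
  refine ⟨_, hp, _, hq, ?_⟩
  have h0 : (0 : ℝ) ∈ segment ℝ (-a) b := by
    rw [segment_eq_Icc (by linarith)]; exact ⟨by linarith, hb⟩
  have := mem_image_of_mem (AffineMap.lineMap x (x + v) : ℝ →ᵃ[ℝ] E) h0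
  rw [image_segment] at this
  simpa [AffineMap.lineMap_apply, add_comm] using this

theorem Convex.exists_isExposed_finrank_lt [FiniteDimensional ℝ E] (hU : Convex ℝ U)
    (hint : (interior U).Nonempty) {p : E} (hpU : p ∈ U) (hp : p ∉ interior U) :
    ∃ F, IsExposed ℝ U F ∧ p ∈ F ∧ finrank ℝ (vectorSpan ℝ F) < finrank ℝ E := by
  obtain ⟨f, hf⟩ := geometric_hahn_banach_open_point hU.interior isOpen_interior hp
  have hle : ∀ z ∈ U, f z ≤ f p := fun z hz =>
    closure_minimal (fun y hy => (hf y hy).le) (isClosed_le f.continuous continuous_const)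
      ((hU.closure_interior_eq_closure_of_nonempty_interior hint).symm ▸ subset_closure hz)
  refine ⟨f.toExposed U, ContinuousLinearMap.toExposed.isExposed, ⟨hpU, hle⟩, ?_⟩
  have hker : vectorSpan ℝ (f.toExposed U) ≤ LinearMap.ker (f : E →ₗ[ℝ] ℝ) := by
    rw [vectorSpan_def]
    refine Submodule.span_le.2 ?_
    rintro _ ⟨y, hy, z, hz, rfl⟩
    simp [le_antisymm (hz.2 y hy.1) (hy.2 z hz.1)]
  have hne : LinearMap.ker (f : E →ₗ[ℝ] ℝ) ≠ ⊤ := by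
    obtain ⟨w, hw⟩ := hint
    intro htop
    have hf0 : (f : E →ₗ[ℝ] ℝ) = 0 := LinearMap.ker_eq_top.1 htop
    have h0 : ∀ y, f y = 0 := LinearMap.congr_fun hf0
    linarith [hf w hw, h0 w, h0 p]
  exact (Submodule.finrank_mono hker).trans_lt (Submodule.finrank_lt hne)

theorem IsCompact.subset_convexHull_extremePoints_of_interior_nonempty [FiniteDimensional ℝ E]
    (hUc : IsCompact U) (hU : Convex ℝ U) (hint : (interior U).Nonempty)
    (ih : ∀ F : Set E, IsCompact F → Convex ℝ F → finrank ℝ (vectorSpan ℝ F) < finrank ℝ E →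
      F ⊆ convexHull ℝ (F.extremePoints ℝ)) :
    U ⊆ convexHull ℝ (U.extremePoints ℝ) := by
  intro x hx
  rcases subsingleton_or_nontrivial E with _ | _
  · rw [extremePoints_eq_self]
    exact subset_convexHull ℝ U hx
  have hbdry : ∀ p ∈ U \ interior U, p ∈ convexHull ℝ (U.extremePoints ℝ) := by
    rintro p ⟨hpU, hp⟩
    obtain ⟨F, hF, hpF, hdim⟩ := hU.exists_isExposed_finrank_lt hint hpU hp
    exact convexHull_mono hF.isExtreme.extremePoints_subset_extremePoints
      (ih F (hF.isCompact hUc) (hF.convex hU) hdim hpF)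
  obtain ⟨p, hp, q, hq, hxpq⟩ := hUc.exists_mem_segment_diff_interior hx
  exact (convex_convexHull ℝ _).segment_subset (hbdry p hp) (hbdry q hq) hxpq

theorem IsCompact.subset_convexHull_extremePoints_of_vectorSpan [FiniteDimensional ℝ E]
    (hUc : IsCompact U) (hU : Convex ℝ U)
    (ih : ∀ U' : Set (vectorSpan ℝ U), IsCompact U' → Convex ℝ U' →
      U' ⊆ convexHull ℝ (U'.extremePoints ℝ)) :
    U ⊆ convexHull ℝ (U.extremePoints ℝ) := by
  intro x hx
  set W := vectorSpan ℝ U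
  let φ : W →ᵃ[ℝ] E := (AffineEquiv.constVAdd ℝ E x).toAffineMap.comp W.subtype.toAffineMap
  have hφ : ∀ w : W, φ w = x + w := fun w => rfl
  have hemb : Topology.IsClosedEmbedding φ :=
    (Homeomorph.addLeft x).isClosedEmbedding.comp
      (LinearMap.isClosedEmbedding_of_injective W.ker_subtype)
  have hrange : U ⊆ range φ := fun u hu =>
    ⟨⟨u - x, vsub_mem_vectorSpan ℝ hu hx⟩, by simp [hφ]⟩
  have h0 : (0 : W) ∈ convexHull ℝ ((φ ⁻¹' U).extremePoints ℝ) :=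
    ih _ (hemb.isCompact_preimage hUc) (hU.affine_preimage φ) (by simpa [hφ] using hx)
  have hext := AffineMap.image_extremePoints_subset_of_injective hemb.injective (φ ⁻¹' U)
  rw [image_preimage_eq_of_subset hrange] at hext
  have := convexHull_mono hext (AffineMap.image_convexHull φ _ ▸ mem_image_of_mem φ h0)
  simpa [hφ] using this

end Minkowski

universe u

theorem IsCompact.subset_convexHull_extremePoints {E : Type u} [NormedAddCommGroup E]
    [NormedSpace ℝ E] [FiniteDimensional ℝ E] {U : Set E} (hUc : IsCompact U)
    (hU : Convex ℝ U) : U ⊆ convexHull ℝ (U.extremePoints ℝ) := by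
  -- Induct on the ambient dimension over all spaces at once: a set that is not full-dimensional
  -- is handled inside its own span.
  suffices ∀ d, ∀ (E : Type u) [NormedAddCommGroup E] [NormedSpace ℝ E] [FiniteDimensional ℝ E],
      finrank ℝ E = d → ∀ U : Set E, IsCompact U → Convex ℝ U →
        U ⊆ convexHull ℝ (U.extremePoints ℝ) from this _ E rfl U hUc hU
  intro d
  induction d using Nat.strong_induction_on with | _ d ih => ?_
  intro E _ _ _ hd U hUc hU
  have low : ∀ F : Set E, IsCompact F → Convex ℝ F → finrank ℝ (vectorSpan ℝ F) < d →
      F ⊆ convexHull ℝ (F.extremePoints ℝ) := fun F hFc hF hlt =>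
    hFc.subset_convexHull_extremePoints_of_vectorSpan hF (ih _ hlt _ rfl)
  rcases (Submodule.finrank_le (vectorSpan ℝ U)).lt_or_eq with hlt | heq
  · exact low U hUc hU (hd ▸ hlt)
  rcases U.eq_empty_or_nonempty with rfl | hne
  · simp
  have hint : (interior U).Nonempty := by
    rw [hU.interior_nonempty_iff_affineSpan_eq_top,
      ← AffineSubspace.direction_eq_top_iff_of_nonempty ((affineSpan_nonempty ℝ).2 hne),
      direction_affineSpan]
    exact Submodule.eq_top_of_finrank_eq heq
  exact hUc.subset_convexHull_extremePoints_of_interior_nonempty hU hint (hd ▸ low)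

theorem exists_fin_stdSimplex_of_mem_convexHull {𝕜 E : Type*} [Field 𝕜] [LinearOrder 𝕜]
    [IsStrictOrderedRing 𝕜] [AddCommGroup E] [Module 𝕜 E] [FiniteDimensional 𝕜 E] {V : Set E}
    {x : E} (hx : x ∈ convexHull 𝕜 V) :
    ∃ (m : ℕ) (v : Fin m → E) (lam : Fin m → 𝕜), m ≤ finrank 𝕜 E + 1 ∧ (∀ j, v j ∈ V) ∧
      lam ∈ stdSimplex 𝕜 (Fin m) ∧ ∑ j, lam j • v j = x := by
  obtain ⟨ι, _, z, w, hzV, hind, hw0, hw1, hwx⟩ := eq_pos_convex_span_of_mem_convexHull hx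
  let e := Fintype.equivFin ι
  refine ⟨Fintype.card ι, z ∘ e.symm, w ∘ e.symm, ?_, fun j => hzV (Set.mem_range_self _),
    ⟨fun j => (hw0 _).le, ?_⟩, ?_⟩
  · exact hind.card_le_finrank_succ.trans (by gcongr; exact Submodule.finrank_le _)
  · rw [← hw1]; exact e.symm.sum_comp w
  · rw [← hwx]; exact e.symm.sum_comp fun i => w i • z i

lemma min_sub_min_le_min_sub_min {a a' c c' : ℝ} (ha : a ≤ a') (hc : c ≤ c') :
    min a c' - min a c ≤ min a' c' - min a' c := by
  rcases min_cases a c' with ⟨h1, h1'⟩ | ⟨h1, h1'⟩ <;>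
  rcases min_cases a c with ⟨h2, h2'⟩ | ⟨h2, h2'⟩ <;>
  rcases min_cases a' c' with ⟨h3, h3'⟩ | ⟨h3, h3'⟩ <;>
  rcases min_cases a' c with ⟨h4, h4'⟩ | ⟨h4, h4'⟩ <;> linarith

lemma Fin.sum_univ_sub_telescope {M : Type*} [AddCommGroup M] (g : ℕ → M) (m : ℕ) :
    ∑ j : Fin m, (g (j + 1) - g j) = g m - g 0 := by
  rw [Fin.sum_univ_eq_sum_range (fun j => g (j + 1) - g j), sum_range_sub]

namespace Stack

variable {m : ℕ} (c : Fin m → ℝ)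

noncomputable def height (j : ℕ) : ℝ := ∑ k : Fin m with k.val < j, c k

/-- Stacking the intervals of lengths `c 0, c 1, …` end to end, the length of the part of the
`j`-th one lying below height `a`. -/
noncomputable def massBelow (a : ℝ) (j : Fin m) : ℝ :=
  min a (height c (j + 1)) - min a (height c j)

noncomputable def layer (i : ℕ) (j : Fin m) : ℝ := massBelow c (i + 1) j - massBelow c i j

variable {c}

lemma height_zero : height c 0 = 0 := by simp [height]

lemma height_of_le {j : ℕ} (hj : m ≤ j) : height c j = ∑ k, c k := by
  rw [height, filter_true_of_mem fun k _ => k.isLt.trans_le hj]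

lemma height_succ (j : Fin m) : height c (j + 1) = height c j + c j := by
  have : (univ.filter fun k : Fin m => k.val < j.val + 1) =
      insert j (univ.filter fun k : Fin m => k.val < j.val) := by
    ext k
    simp only [mem_filter, mem_univ, true_and, mem_insert, Fin.ext_iff]
    omega
  simp only [height]
  rw [this, sum_insert (by simp), add_comm]

lemma height_mono (hc : ∀ j, 0 ≤ c j) : Monotone (height c) := fun _ _ hij =>
  sum_le_sum_of_subset_of_nonneg (monotone_filter_right _ fun _ _ hk => hk.trans_le hij)
    fun k _ _ => hc k

lemma height_nonneg (hc : ∀ j, 0 ≤ c j) (j : ℕ) : 0 ≤ height c j :=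
  sum_nonneg fun k _ => hc k

lemma height_le_sum (hc : ∀ j, 0 ≤ c j) (j : ℕ) : height c j ≤ ∑ k, c k :=
  height_of_le (c := c) (le_max_right j m) ▸ height_mono hc (le_max_left j m)

lemma sum_massBelow {a : ℝ} (ha₀ : 0 ≤ a) (ha : a ≤ ∑ k, c k) : ∑ j, massBelow c a j = a := by
  simp only [massBelow]
  rw [Fin.sum_univ_sub_telescope (fun j => min a (height c j)),
    height_of_le le_rfl, height_zero, min_eq_left ha, min_eq_right ha₀, sub_zero]

lemma massBelow_eq_zero_of_eq_zero {j : Fin m} (hj : c j = 0) (a : ℝ) : massBelow c a j = 0 := by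
  rw [massBelow, height_succ, hj, add_zero, sub_self]

lemma layer_nonneg (hc : ∀ j, 0 ≤ c j) (i : ℕ) (j : Fin m) : 0 ≤ layer c i j := by
  have := min_sub_min_le_min_sub_min (le_add_of_nonneg_right zero_le_one : (i : ℝ) ≤ i + 1)
    (height_succ j ▸ le_add_of_nonneg_right (hc j) : height c j ≤ height c (j + 1))
  rw [layer, massBelow, massBelow]
  linarith

lemma sum_layer_eq_one {i : ℕ} (hi : (i : ℝ) + 1 ≤ ∑ k, c k) : ∑ j, layer c i j = 1 := by
  simp only [layer]
  rw [sum_sub_distrib, sum_massBelow (by positivity) hi,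
    sum_massBelow (by positivity) (by linarith)]
  ring

lemma sum_layer_apply_eq (hc : ∀ j, 0 ≤ c j) {B : ℕ} (hsum : ∑ k, c k = B) (j : Fin m) :
    ∑ i : Fin B, layer c i j = c j := by
  have hle := height_le_sum hc
  rw [hsum] at hle
  have hstep : ∀ i : ℕ, layer c i j = massBelow c ((i + 1 : ℕ) : ℝ) j - massBelow c i j := by
    simp [layer]
  rw [Fin.sum_univ_eq_sum_range (fun i => layer c i j), sum_congr rfl fun i _ => hstep i,
    sum_range_sub (fun i : ℕ => massBelow c i j), massBelow, massBelow, Nat.cast_zero,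
    min_eq_right (hle _), min_eq_right (hle _), min_eq_left (height_nonneg hc _),
    min_eq_left (height_nonneg hc _), height_succ]
  ring

lemma height_bounds_of_layer_ne_zero (hc : ∀ j, 0 ≤ c j) {i : ℕ} {j : Fin m}
    (hij : layer c i j ≠ 0) :
    (i : ℝ) < height c (j + 1) ∧ height c j < i + 1 := by
  have hj : height c j ≤ height c (j + 1) := height_mono hc (Nat.le_succ j)
  rw [layer, massBelow, massBelow] at hij
  constructor
  · by_contra! h
    rw [min_eq_right (by linarith), min_eq_right (by linarith), min_eq_right h,
      min_eq_right (hj.trans h), sub_self] at hij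
    exact hij rfl
  · by_contra! h
    rw [min_eq_left (h.trans hj), min_eq_left h, min_eq_left (by linarith),
      min_eq_left (by linarith)] at hij
    exact hij (by ring)

/-- Every point of the support of `layer c i`, except its first one, sits strictly inside
the height range `(i, i + 1)`; these ranges are disjoint, which bounds the total excess. -/
lemma sum_card_support_layer_le (hc : ∀ j, 0 ≤ c j) {B : ℕ} (hB : 0 < B)
    (hsum : ∑ k, c k = B) :
    ∑ i : Fin B, (#{j | layer c i j ≠ 0} - 1) ≤ #{j | c j ≠ 0} - 1 := by
  set S : Fin B → Finset (Fin m) := fun i => {j | layer c i j ≠ 0}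
  have hS : ∀ i, (S i).Nonempty := fun i => by
    by_contra hemp
    have hone := sum_layer_eq_one (c := c) (i := i) (by rw [hsum]; exact_mod_cast i.isLt)
    have hempty : S i = ∅ := not_nonempty_iff_eq_empty.1 hemp
    simp only [S] at hempty
    rw [← sum_filter_ne_zero, hempty, sum_empty] at hone
    exact zero_ne_one hone
  set supp : Finset (Fin m) := {j | c j ≠ 0}
  have hsupp : ∀ i, S i ⊆ supp := fun i j hj => by
    simp only [S, supp, mem_filter, mem_univ, true_and] at hj ⊢
    exact fun h0 => hj (by rw [layer, massBelow_eq_zero_of_eq_zero h0,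
      massBelow_eq_zero_of_eq_zero h0, sub_self])
  have hsuppne : supp.Nonempty :=
    (hS ⟨0, hB⟩).mono (hsupp _)
  set T : Fin B → Finset (Fin m) := fun i => (S i).erase ((S i).min' (hS i))
  have hT : ∀ i, ∀ j ∈ T i, (i : ℝ) < height c j ∧ height c j < i + 1 := by
    intro i j hj
    obtain ⟨hne, hjS⟩ := mem_erase.1 hj
    have hlt : (S i).min' (hS i) < j := lt_of_le_of_ne ((S i).min'_le j hjS) (Ne.symm hne)
    have hfirst := (mem_filter.1 ((S i).min'_mem (hS i))).2
    refine ⟨(height_bounds_of_layer_ne_zero hc hfirst).1.trans_le (height_mono hc hlt), ?_⟩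
    exact (height_bounds_of_layer_ne_zero hc (mem_filter.1 hjS).2).2
  have hdisj : (↑(univ : Finset (Fin B)) : Set (Fin B)).PairwiseDisjoint T := by
    intro i _ i' _ hii'
    refine disjoint_left.2 fun j hj hj' => hii' (Fin.ext ?_)
    obtain ⟨h1, h2⟩ := hT i j hj
    obtain ⟨h1', h2'⟩ := hT i' j hj'
    have : (i : ℕ) < i' + 1 := by exact_mod_cast h1.trans h2'
    have : (i' : ℕ) < i + 1 := by exact_mod_cast h1'.trans h2
    omega
  have hTsub : ∀ i, T i ⊆ supp.erase (supp.min' hsuppne) := by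
    intro i j hj
    obtain ⟨hne, hjS⟩ := mem_erase.1 hj
    refine mem_erase.2 ⟨ne_of_gt ?_, hsupp i hjS⟩
    calc supp.min' hsuppne ≤ (S i).min' (hS i) := min'_le _ _ (hsupp i ((S i).min'_mem _))
      _ < j := lt_of_le_of_ne ((S i).min'_le j hjS) (Ne.symm hne)
  calc ∑ i : Fin B, (#(S i) - 1) = ∑ i, #(T i) :=
        sum_congr rfl fun i _ => (card_erase_of_mem ((S i).min'_mem _)).symm
    _ = #(univ.biUnion T) := (card_biUnion hdisj).symm
    _ ≤ #supp - 1 :=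
        (card_le_card (biUnion_subset.2 fun i _ => hTsub i)).trans_eq
          (card_erase_of_mem (min'_mem _ _))

end Stack

theorem exists_stdSimplex_average_eq {m B : ℕ} (hB : 0 < B) {lam : Fin m → ℝ}
    (hlam : lam ∈ stdSimplex ℝ (Fin m)) :
    ∃ w : Fin B → Fin m → ℝ, (∀ i, w i ∈ stdSimplex ℝ (Fin m)) ∧
      (∀ j, (B : ℝ)⁻¹ * ∑ i, w i j = lam j) ∧
      ∑ i, (#{j | w i j ≠ 0} - 1) ≤ #{j | lam j ≠ 0} - 1 := by
  have hB' : (B : ℝ) ≠ 0 := by positivity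
  set c : Fin m → ℝ := fun j => B * lam j
  have hc : ∀ j, 0 ≤ c j := fun j => mul_nonneg (Nat.cast_nonneg B) (hlam.1 j)
  have hsum : ∑ k, c k = B := by rw [← mul_sum, hlam.2, mul_one]
  have hsupp : #{j | c j ≠ 0} = #{j | lam j ≠ 0} := by
    simp [c, hB']
  refine ⟨fun i => Stack.layer c i, fun i => ⟨Stack.layer_nonneg hc i, Stack.sum_layer_eq_one ?_⟩,
    fun j => ?_, (Stack.sum_card_support_layer_le hc hB hsum).trans_eq (by rw [hsupp])⟩
  · rw [hsum]; exact_mod_cast i.isLt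
  · rw [Stack.sum_layer_apply_eq hc hsum, inv_mul_cancel_left₀ hB']

noncomputable def levelBound (B : ℕ) (D : ℝ) (K t : ℕ) : ℝ :=
  ∑ k ∈ range K, min 1 ((t : ℝ) / (B : ℝ) ^ k) + D * min 1 ((t : ℝ) / (B : ℝ) ^ K)

section LevelBound

variable {B : ℕ} {D : ℝ}

lemma levelBound_nonneg (hD : 0 ≤ D) (K t : ℕ) : 0 ≤ levelBound B D K t := by
  unfold levelBound; positivity

lemma levelBound_zero {t : ℕ} (ht : 1 ≤ t) : levelBound B D 0 t = D := by
  simp [levelBound, min_eq_left (Nat.one_le_cast.2 ht : (1 : ℝ) ≤ t)]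

lemma inv_mul_sum_min_one_div_pow_le (hB : 0 < B) {t : ℕ} (ts : Fin B → ℕ)
    (hts : ∑ i, ts i ≤ t) (k : ℕ) :
    (B : ℝ)⁻¹ * ∑ i, min 1 ((ts i : ℝ) / (B : ℝ) ^ k) ≤ min 1 ((t : ℝ) / (B : ℝ) ^ (k + 1)) := by
  have hB' : (0 : ℝ) < B := by exact_mod_cast hB
  refine le_min ?_ ?_
  · calc (B : ℝ)⁻¹ * ∑ i, min 1 ((ts i : ℝ) / (B : ℝ) ^ k) ≤ (B : ℝ)⁻¹ * ∑ _i : Fin B, 1 := by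
          gcongr; exact min_le_left _ _
      _ = 1 := by simp [hB'.ne']
  · calc (B : ℝ)⁻¹ * ∑ i, min 1 ((ts i : ℝ) / (B : ℝ) ^ k)
        ≤ (B : ℝ)⁻¹ * ∑ i, (ts i : ℝ) / (B : ℝ) ^ k := by
          gcongr; exact min_le_right _ _
      _ ≤ (B : ℝ)⁻¹ * ((t : ℝ) / (B : ℝ) ^ k) := by
          rw [← sum_div]; gcongr; exact_mod_cast hts
      _ = (t : ℝ) / (B : ℝ) ^ (k + 1) := by rw [pow_succ]; field_simp

lemma one_add_inv_mul_sum_levelBound_le (hB : 0 < B) (hD : 0 ≤ D) (K : ℕ) {t : ℕ} (ht : 1 ≤ t)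
    (ts : Fin B → ℕ) (hts : ∑ i, ts i ≤ t) :
    1 + (B : ℝ)⁻¹ * ∑ i, levelBound B D K (ts i) ≤ levelBound B D (K + 1) t := by
  have hterm := inv_mul_sum_min_one_div_pow_le hB ts hts
  have hfirst : min 1 ((t : ℝ) / (B : ℝ) ^ 0) = 1 := by
    simp [min_eq_left (Nat.one_le_cast.2 ht : (1 : ℝ) ≤ t)]
  simp only [levelBound]
  rw [sum_range_succ', hfirst, sum_add_distrib, sum_comm, ← mul_sum, mul_add, mul_sum,
    mul_left_comm]
  have := sum_le_sum fun k (_ : k ∈ range K) => hterm k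
  have := mul_le_mul_of_nonneg_left (hterm K) hD
  linarith

end LevelBound

def BarycentricallyAlmostConvexOn {E : Type*} [AddCommGroup E] [Module ℝ E] (B : ℕ) (U : Set E)
    (h : E → ℝ) : Prop :=
  ∀ y : Fin B → E, (∀ i, y i ∈ U) →
    h ((B : ℝ)⁻¹ • ∑ i, y i) ≤ 1 + (1 / (B : ℝ)) * ∑ i, h (y i)

section AlmostConvex

variable {E : Type*} [AddCommGroup E] [Module ℝ E]

lemma exists_sum_smul_eq_of_card_support_le_one {m : ℕ} {lam : Fin m → ℝ}
    (hlam : lam ∈ stdSimplex ℝ (Fin m)) (hcard : #{j | lam j ≠ 0} ≤ 1) (v : Fin m → E) :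
    ∃ j₀, ∑ j, lam j • v j = v j₀ := by
  obtain ⟨j₀, hj₀⟩ : ∃ j₀, ({j | lam j ≠ 0} : Finset (Fin m)) = {j₀} := by
    refine card_eq_one.1 (le_antisymm hcard (card_pos.2 ?_))
    by_contra hemp
    have h1 := hlam.2
    rw [← sum_filter_ne_zero, not_nonempty_iff_eq_empty.1 hemp, sum_empty] at h1
    exact zero_ne_one h1
  have hzero : ∀ j ≠ j₀, lam j = 0 := fun j hj => by
    by_contra hne
    exact hj (mem_singleton.1 (hj₀ ▸ mem_filter.2 ⟨mem_univ j, hne⟩))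
  have hone : lam j₀ = 1 := by
    rw [← hlam.2, sum_eq_single j₀ (fun j _ hj => hzero j hj) (by simp)]
  refine ⟨j₀, ?_⟩
  rw [sum_eq_single j₀ (fun j _ hj => by rw [hzero j hj, zero_smul]) (by simp), hone, one_smul]

variable {B : ℕ} {U V : Set E} {h : E → ℝ} {s D : ℝ}

theorem BarycentricallyAlmostConvexOn.apply_sum_le (hac : BarycentricallyAlmostConvexOn B U h)
    (hB : 0 < B) (hU : Convex ℝ U) (hVU : V ⊆ U) (hs : ∀ v ∈ V, h v ≤ s) (hD : 0 ≤ D)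
    (hUD : ∀ x ∈ U, h x ≤ s + D) {m : ℕ} {v : Fin m → E} (hv : ∀ j, v j ∈ V) (K : ℕ) {t : ℕ}
    {lam : Fin m → ℝ} (hlam : lam ∈ stdSimplex ℝ (Fin m)) (hcard : #{j | lam j ≠ 0} ≤ t + 1) :
    h (∑ j, lam j • v j) ≤ s + levelBound B D K t := by
  have hvertex : ∀ {K t : ℕ} {lam : Fin m → ℝ}, lam ∈ stdSimplex ℝ (Fin m) →
      #{j | lam j ≠ 0} ≤ 1 → h (∑ j, lam j • v j) ≤ s + levelBound B D K t := by
    intro K t lam hlam hle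
    obtain ⟨j₀, hj₀⟩ := exists_sum_smul_eq_of_card_support_le_one hlam hle v
    rw [hj₀]
    exact (hs _ (hv j₀)).trans (le_add_of_nonneg_right (levelBound_nonneg hD K t))
  induction K generalizing t lam with
  | zero =>
    obtain hle | hlt := le_or_gt #{j | lam j ≠ 0} 1
    · exact hvertex hlam hle
    rw [levelBound_zero (by omega)]
    exact hUD _ (hU.sum_mem (fun j _ => hlam.1 j) hlam.2 fun j _ => hVU (hv j))
  | succ K ih =>
    obtain hle | hlt := le_or_gt #{j | lam j ≠ 0} 1
    · exact hvertex hlam hle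
    obtain ⟨w, hw, havg, hexcess⟩ := exists_stdSimplex_average_eq hB hlam
    set y : Fin B → E := fun i => ∑ j, w i j • v j
    have hy : ∀ i, y i ∈ U := fun i =>
      hU.sum_mem (fun j _ => (hw i).1 j) (hw i).2 fun j _ => hVU (hv j)
    have hx : (B : ℝ)⁻¹ • ∑ i, y i = ∑ j, lam j • v j := by
      simp only [y]
      rw [sum_comm, smul_sum]
      refine sum_congr rfl fun j _ => ?_
      rw [← sum_smul, smul_smul, havg]
    have hchild : ∀ i, h (y i) ≤ s + levelBound B D K (#{j | w i j ≠ 0} - 1) := fun i =>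
      ih (hw i) (by omega)
    have hB' : (B : ℝ) ≠ 0 := by positivity
    calc h (∑ j, lam j • v j) = h ((B : ℝ)⁻¹ • ∑ i, y i) := by rw [hx]
      _ ≤ 1 + (B : ℝ)⁻¹ * ∑ i, h (y i) := by simpa using hac y hy
      _ ≤ 1 + (B : ℝ)⁻¹ * ∑ i, (s + levelBound B D K (#{j | w i j ≠ 0} - 1)) := by
          gcongr with i; exact hchild i
      _ = s + (1 + (B : ℝ)⁻¹ * ∑ i, levelBound B D K (#{j | w i j ≠ 0} - 1)) := by
          rw [sum_add_distrib, sum_const, card_univ, Fintype.card_fin, nsmul_eq_mul]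
          field_simp
          ring
      _ ≤ s + levelBound B D (K + 1) t := by
          gcongr
          exact one_add_inv_mul_sum_levelBound_le hB hD K (by omega) _ (by omega)

end AlmostConvex

lemma kappa_eq (B n : ℕ) :
    kappa B n = Nat.log B n + 1 + n / ((B - 1) * (B : ℝ) ^ Nat.log B n) := by
  rw [kappa, Real.floor_logb_natCast (Nat.cast_nonneg n), Int.log_natCast, Int.cast_natCast,
    zpow_natCast]

/-- The first `⌊log_B n⌋ + 1` terms are at most `1`; the rest form a geometric tail. -/
lemma sum_min_one_div_pow_le_kappa {B : ℕ} (hB : 2 ≤ B) (n K : ℕ) :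
    ∑ k ∈ range K, min 1 ((n : ℝ) / (B : ℝ) ^ k) ≤ kappa B n := by
  set L := Nat.log B n with hL
  have hB' : (2 : ℝ) ≤ B := by exact_mod_cast hB
  have hr0 : (0 : ℝ) ≤ (B : ℝ)⁻¹ := by positivity
  have hr1 : (B : ℝ)⁻¹ < 1 := inv_lt_one_of_one_lt₀ (by linarith)
  calc ∑ k ∈ range K, min 1 ((n : ℝ) / (B : ℝ) ^ k)
      ≤ ∑ k ∈ range (L + 1 + K), min 1 ((n : ℝ) / (B : ℝ) ^ k) :=
        sum_le_sum_of_subset_of_nonneg (range_subset_range.2 (by omega)) fun _ _ _ => by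
          positivity
    _ = ∑ k ∈ range (L + 1), min 1 ((n : ℝ) / (B : ℝ) ^ k) +
          ∑ k ∈ Ico (L + 1) (L + 1 + K), min 1 ((n : ℝ) / (B : ℝ) ^ k) :=
        (sum_range_add_sum_Ico _ (by omega)).symm
    _ ≤ ∑ _k ∈ range (L + 1), (1 : ℝ) + ∑ k ∈ Ico (L + 1) (L + 1 + K), n * (B : ℝ)⁻¹ ^ k := by
        gcongr with k
        · exact min_le_left _ _
        · rw [inv_pow, ← div_eq_mul_inv]; exact min_le_right _ _
    _ ≤ (L + 1) + n * ((B : ℝ)⁻¹ ^ (L + 1) / (1 - (B : ℝ)⁻¹)) := by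
        rw [← mul_sum]
        gcongr
        · simp
        · exact geom_sum_Ico_le_of_lt_one hr0 hr1
    _ = kappa B n := by
        rw [kappa_eq, ← hL, inv_pow]
        have : (B : ℝ) - 1 ≠ 0 := by linarith
        field_simp
        ring

lemma le_kappa_of_forall_le_levelBound {B n : ℕ} (hB : 2 ≤ B) {D : ℝ} (hD : 0 ≤ D)
    (hle : ∀ K, D ≤ levelBound B D K n) : D ≤ kappa B n := by
  have hB' : (1 : ℝ) < B := by exact_mod_cast hB
  have hlim : Tendsto (fun K : ℕ => kappa B n + D * ((n : ℝ) / (B : ℝ) ^ K)) atTop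
      (nhds (kappa B n)) := by
    simpa using (tendsto_const_nhds.div_atTop (tendsto_pow_atTop_atTop_of_one_lt hB')).const_mul D
      |>.const_add (kappa B n)
  refine ge_of_tendsto' hlim fun K => (hle K).trans ?_
  rw [levelBound]
  gcongr
  · exact sum_min_one_div_pow_le_kappa hB n K
  · exact min_le_right _ _

theorem stmt8_general (B n : ℕ) (hB : 2 ≤ B)
    (U : Set (Fin n → ℝ)) (hUne : U.Nonempty) (hUcp : IsCompact U)
    (hUconv : Convex ℝ U) (h : (Fin n → ℝ) → ℝ)
    (hbdd : ∃ M : ℝ, ∀ x ∈ U, h x ≤ M)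
    (hac : ∀ y : Fin B → (Fin n → ℝ), (∀ i, y i ∈ U) →
      h ((B : ℝ)⁻¹ • ∑ i, y i) ≤ 1 + (1 / (B : ℝ)) * ∑ i, h (y i)) :
    sSup (h '' U) ≤ kappa B n + sSup (h '' Set.extremePoints ℝ U) := by
  obtain ⟨M, hM⟩ := hbdd
  have hbddU : BddAbove (h '' U) := ⟨M, Set.forall_mem_image.2 hM⟩
  set s := sSup (h '' U.extremePoints ℝ)
  set S := sSup (h '' U)
  have hs : ∀ v ∈ U.extremePoints ℝ, h v ≤ s := fun v hv =>
    le_csSup (hbddU.mono (Set.image_mono extremePoints_subset)) (Set.mem_image_of_mem h hv)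
  have hsS : s ≤ S := csSup_le_csSup hbddU ((hUcp.extremePoints_nonempty hUne).image h)
    (Set.image_mono extremePoints_subset)
  have hUS : ∀ x ∈ U, h x ≤ s + (S - s) := fun x hx => by
    linarith [le_csSup hbddU (Set.mem_image_of_mem h hx)]
  have hlevel : ∀ K, S - s ≤ levelBound B (S - s) K n := fun K => by
    refine sub_le_iff_le_add'.2 (csSup_le (hUne.image h) (Set.forall_mem_image.2 fun x hx => ?_))
    obtain ⟨m, v, lam, hm, hv, hlam, rfl⟩ :=
      exists_fin_stdSimplex_of_mem_convexHull (hUcp.subset_convexHull_extremePoints hUconv hx)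
    refine BarycentricallyAlmostConvexOn.apply_sum_le hac (by omega) hUconv extremePoints_subset
      hs (sub_nonneg.2 hsS) hUS hv K hlam ?_
    exact (card_filter_le _ _).trans (by simpa [finrank_fin_fun] using hm)
  linarith [le_kappa_of_forall_le_levelBound hB (sub_nonneg.2 hsS) hlevel]

theorem stmt8 (B n : ℕ) (hB : 2 ≤ B) (hn : 1 ≤ n)
    (U : Set (Fin n → ℝ)) (hUne : U.Nonempty) (hUcp : IsCompact U)
    (hUconv : Convex ℝ U) (h : (Fin n → ℝ) → ℝ)
    (hbdd : ∃ M : ℝ, ∀ x ∈ U, h x ≤ M)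
    (hac : ∀ y : Fin B → (Fin n → ℝ), (∀ i, y i ∈ U) →
      h ((B : ℝ)⁻¹ • ∑ i, y i) ≤ 1 + (1 / (B : ℝ)) * ∑ i, h (y i)) :
    sSup (h '' U) ≤ kappa B n + sSup (h '' Set.extremePoints ℝ U) :=
  stmt8_general B n hB U hUne hUcp hUconv h hbdd hac
end

section
/- Let B ≥ 2 be an integer, n ≥ 1, U ⊆ ℝ^n a convex set, and ε > 0. Suppose h : U → ℝ is bounded above on every compact subset of U and satisfies h((x_0+⋯+x_{B−1})/B) ≤ ε + (1/B)(h(x_0)+⋯+h(x_{B−1})) for all x_0,…,x_{B−1} ∈ U. Then there exists a convex function g : U → ℝ such that h(x) ≤ g(x) ≤ h(x) + κ_B(n)·ε for all x ∈ U, and there exists a convex function g_0 : U → ℝ such that |h(x) − g_0(x)| ≤ (κ_B(n)/2)·ε for all x ∈ U. -/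
/-!
Cutting the cumulative weights of a convex combination of `m` points at `1/B, …, (B-1)/B` splits
it into `B` combinations of equal mass whose supports have at most `m + B - 1` points in total.
One application of the hypothesis to the `B` barycentres, followed by induction on the support,
bounds the Jensen gap `h(∑ wᵢ pᵢ) - ∑ wᵢ h(pᵢ)` of a combination of `k + 1` points by `κ_B(k) ε`;
a piece with full support is absorbed by bounding the supremum of all gaps on that support.
Carathéodory's reduction, done without increasing `∑ wᵢ h(pᵢ)`, brings every combination down to
`n + 1` points. Hence the lower boundary of the convex hull of the graph of `h` is a convex
function between `h - κ_B(n) ε` and `h`, and shifting it up gives `g` and `g₀`.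
-/

open scoped BigOperators

open Finset Module
open scoped Pointwise

/-- `κ_B(x)` with `⌊log_B x⌋` replaced by an arbitrary level `L`. -/
noncomputable def kappaOfLevel (B L : ℕ) (x : ℝ) : ℝ :=
  L + 1 + x / ((B - 1) * (B : ℝ) ^ L)

/-- `κ_B(k)` for `k ≠ 0`; at `k = 0` (a single point, which has no Jensen gap) it is `0`,
whereas `kappa B 0 = 1`. -/
noncomputable def kappaNat (B k : ℕ) : ℝ :=
  if k = 0 then 0 else kappaOfLevel B (Nat.log B k) k

section Kappa

variable {B : ℕ}

lemma kappa_eq_kappaOfLevel (n : ℕ) : kappa B n = kappaOfLevel B (Nat.log B n) n := by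
  rw [kappa, Real.floor_logb_natCast n.cast_nonneg, Int.log_natCast, kappaOfLevel]
  norm_cast

lemma kappaOfLevel_succ (hB : 1 < B) (L : ℕ) (x : ℝ) :
    kappaOfLevel B (L + 1) x = kappaOfLevel B L x + 1 - x / (B : ℝ) ^ (L + 1) := by
  have : (1 : ℝ) < B := by exact_mod_cast hB
  have : (B : ℝ) - 1 ≠ 0 := by linarith
  have : (B : ℝ) ≠ 0 := by positivity
  simp only [kappaOfLevel]
  field_simp
  push_cast
  ring

lemma kappaOfLevel_mono (hB : 1 < B) (L : ℕ) {x y : ℝ} (hxy : x ≤ y) :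
    kappaOfLevel B L x ≤ kappaOfLevel B L y := by
  have : (1 : ℝ) < B := by exact_mod_cast hB
  have : 0 < ((B : ℝ) - 1) * (B : ℝ) ^ L := by apply mul_pos <;> [linarith; positivity]
  unfold kappaOfLevel
  gcongr

lemma kappaOfLevel_log_le (hB : 1 < B) {k : ℕ} (hk : k ≠ 0) (L : ℕ) :
    kappaOfLevel B (Nat.log B k) k ≤ kappaOfLevel B L k := by
  rcases le_total (Nat.log B k) L with hL | hL
  · induction L, hL using Nat.le_induction with
    | base => exact le_rfl
    | succ L hL ih =>
      have hk : (k : ℝ) ≤ (B : ℝ) ^ (L + 1) := by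
        exact_mod_cast (Nat.lt_pow_succ_log_self hB k).le.trans
          (Nat.pow_le_pow_right (by omega) (by omega))
      have : (k : ℝ) / (B : ℝ) ^ (L + 1) ≤ 1 := div_le_one_of_le₀ hk (by positivity)
      rw [kappaOfLevel_succ hB]
      linarith
  · induction hL using Nat.decreasingInduction with
    | self => exact le_rfl
    | of_succ L hL ih =>
      have hk : (B : ℝ) ^ (L + 1) ≤ k := by
        exact_mod_cast (Nat.pow_le_pow_right (by omega) hL).trans (Nat.pow_log_le_self B hk)
      have : 1 ≤ (k : ℝ) / (B : ℝ) ^ (L + 1) := (one_le_div (by positivity)).2 hk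
      rw [kappaOfLevel_succ hB] at ih
      linarith

lemma kappaNat_le_kappaOfLevel (hB : 1 < B) (k L : ℕ) : kappaNat B k ≤ kappaOfLevel B L k := by
  rcases eq_or_ne k 0 with rfl | hk
  · simp only [kappaNat, kappaOfLevel, if_true, Nat.cast_zero, zero_div, add_zero]
    positivity
  · rw [kappaNat, if_neg hk]
    exact kappaOfLevel_log_le hB hk L

lemma kappaNat_le_kappa (hB : 1 < B) (n : ℕ) : kappaNat B n ≤ kappa B n := by
  rw [kappa_eq_kappaOfLevel]
  exact kappaNat_le_kappaOfLevel hB n _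

@[simp] lemma kappaNat_zero : kappaNat B 0 = 0 := if_pos rfl

lemma kappaNat_one (hB : 1 < B) : kappaNat B 1 = B / (B - 1) := by
  have : (1 : ℝ) < B := by exact_mod_cast hB
  have : (B : ℝ) - 1 ≠ 0 := by linarith
  rw [kappaNat, if_neg one_ne_zero, Nat.log_one_right, kappaOfLevel]
  field_simp
  push_cast
  ring

lemma kappaNat_mono (hB : 1 < B) : Monotone (kappaNat B) := by
  intro k k' hkk'
  rcases eq_or_ne k' 0 with rfl | hk'
  · rw [Nat.le_zero.1 hkk']
  calc kappaNat B k ≤ kappaOfLevel B (Nat.log B k') k := kappaNat_le_kappaOfLevel hB k _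
    _ ≤ kappaOfLevel B (Nat.log B k') k' := kappaOfLevel_mono hB _ (by exact_mod_cast hkk')
    _ = kappaNat B k' := (if_neg hk').symm

lemma kappaNat_le_mul (hB : 1 < B) (k : ℕ) : kappaNat B k ≤ k * (B / (B - 1)) := by
  have : (1 : ℝ) < B := by exact_mod_cast hB
  have : (B : ℝ) - 1 ≠ 0 := by linarith
  rcases eq_or_ne k 0 with rfl | hk
  · simp
  have hk : (1 : ℝ) ≤ k := by exact_mod_cast Nat.one_le_iff_ne_zero.2 hk
  calc kappaNat B k ≤ kappaOfLevel B 0 k := kappaNat_le_kappaOfLevel hB k 0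
    _ = 1 + k / (B - 1) := by simp [kappaOfLevel]
    _ ≤ k + k / (B - 1) := by linarith
    _ = k * (B / (B - 1)) := by field_simp; ring

lemma sum_kappaNat_le (hB : 1 < B) {N : ℕ} (hN : N ≠ 0) (s : Fin B → ℕ) (hs : ∑ j, s j ≤ N) :
    ∑ j, kappaNat B (s j) ≤ B * (kappaNat B N - 1) := by
  have : (1 : ℝ) < B := by exact_mod_cast hB
  have : (B : ℝ) - 1 ≠ 0 := by linarith
  have hsN : ∑ j, (s j : ℝ) ≤ N := by exact_mod_cast hs
  rw [kappaNat, if_neg hN]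
  rcases eq_or_ne (Nat.log B N) 0 with hL | hL
  · calc ∑ j, kappaNat B (s j) ≤ ∑ j, (s j : ℝ) * (B / (B - 1)) :=
          sum_le_sum fun j _ ↦ kappaNat_le_mul hB (s j)
      _ ≤ N * (B / (B - 1)) := by
          rw [← sum_mul]; gcongr
      _ = B * (kappaOfLevel B (Nat.log B N) N - 1) := by
          rw [hL, kappaOfLevel]; field_simp; push_cast; ring
  · obtain ⟨L, hL⟩ := Nat.exists_eq_add_one_of_ne_zero hL
    have hden : 0 < ((B : ℝ) - 1) * (B : ℝ) ^ L := by apply mul_pos <;> [linarith; positivity]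
    calc ∑ j, kappaNat B (s j) ≤ ∑ j, kappaOfLevel B L (s j) :=
          sum_le_sum fun j _ ↦ kappaNat_le_kappaOfLevel hB (s j) L
      _ = B * (L + 1) + (∑ j, (s j : ℝ)) / ((B - 1) * (B : ℝ) ^ L) := by
          simp [kappaOfLevel, sum_add_distrib, sum_div]; ring
      _ ≤ B * (L + 1) + N / ((B - 1) * (B : ℝ) ^ L) := by gcongr
      _ = B * (kappaOfLevel B (Nat.log B N) N - 1) := by
          rw [hL, kappaOfLevel, pow_succ]; field_simp; push_cast; ring

end Kappa

/-- The length of `[f k, f (k + 1)] ∩ [g j, g (j + 1)]`. -/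
noncomputable def overlap (f g : ℕ → ℝ) (k j : ℕ) : ℝ :=
  max (min (f (k + 1)) (g (j + 1)) - max (f k) (g j)) 0

section Overlap

variable {f g : ℕ → ℝ}

lemma overlap_nonneg (k j : ℕ) : 0 ≤ overlap f g k j := le_max_right _ _

lemma overlap_comm (k j : ℕ) : overlap f g k j = overlap g f j k := by
  rw [overlap, overlap, min_comm, max_comm (f k)]

lemma max_lt_min_of_overlap_pos {k j : ℕ} (h : 0 < overlap f g k j) :
    max (f k) (g j) < min (f (k + 1)) (g (j + 1)) :=
  sub_pos.1 ((lt_max_iff.1 h).resolve_right (lt_irrefl 0))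

lemma sum_overlap (hf : Monotone f) {j m : ℕ} (hg : g j ≤ g (j + 1)) (h0 : f 0 ≤ g j)
    (hm : g (j + 1) ≤ f m) : ∑ k ∈ range m, overlap f g k j = g (j + 1) - g j := by
  have htele : ∀ k, overlap f g k j =
      max (g j) (min (g (j + 1)) (f (k + 1))) - max (g j) (min (g (j + 1)) (f k)) := by
    intro k
    have := hf k.le_succ
    simp only [overlap, max_def, min_def]
    split_ifs <;> linarith
  rw [sum_congr rfl fun k _ ↦ htele k, sum_range_sub (fun k ↦ max (g j) (min (g (j + 1)) (f k))),
    min_eq_left hm, min_eq_right (h0.trans hg), max_eq_right hg, max_eq_left h0]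

/-- The left endpoint of an overlap is a breakpoint of one of the two subdivisions and determines
the pair of cells. -/
lemma card_overlap_pos_le (hf : Monotone f) (hg : Monotone g) (h0 : f 0 = g 0) (m p : ℕ) :
    #{q ∈ range m ×ˢ range p | 0 < overlap f g q.1 q.2} ≤ m + (p - 1) := by
  classical
  have hleft : ∀ q ∈ {q ∈ range m ×ˢ range p | 0 < overlap f g q.1 q.2},
      max (f q.1) (g q.2) ∈ Set.Ico (f q.1) (f (q.1 + 1)) ∩ Set.Ico (g q.2) (g (q.2 + 1)) := by
    intro q hq
    have := max_lt_min_of_overlap_pos (mem_filter.1 hq).2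
    exact ⟨⟨le_max_left _ _, this.trans_le (min_le_left _ _)⟩,
      ⟨le_max_right _ _, this.trans_le (min_le_right _ _)⟩⟩
  calc _ ≤ #((range m).image f ∪ (Ioo 0 p).image g) := by
        refine card_le_card_of_injOn (fun q ↦ max (f q.1) (g q.2)) ?_ ?_
        · rintro ⟨k, j⟩ hq
          obtain ⟨hkj, -⟩ := mem_filter.1 hq
          obtain ⟨hk, hj⟩ := mem_product.1 hkj
          rw [mem_range] at hk hj
          simp only [coe_union, coe_image, coe_range, coe_Ioo, Set.mem_union, Set.mem_image]
          rcases le_or_gt (g j) (f k) with hgf | hfg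
          · exact .inl ⟨k, hk, (max_eq_left hgf).symm⟩
          · have hj0 : j ≠ 0 := by rintro rfl; exact (h0 ▸ hf k.zero_le : g 0 ≤ f k).not_gt hfg
            exact .inr ⟨j, ⟨Nat.pos_of_ne_zero hj0, hj⟩, (max_eq_right hfg.le).symm⟩
        · intro q hq q' hq' hqq'
          obtain ⟨hf1, hg1⟩ := hleft q hq
          obtain ⟨hf2, hg2⟩ := hleft q' hq'
          simp only at hqq'
          rw [← hqq'] at hf2 hg2
          ext
          · by_contra hne
            exact Set.disjoint_left.1 (hf.pairwise_disjoint_on_Ico_succ hne) hf1 hf2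
          · by_contra hne
            exact Set.disjoint_left.1 (hg.pairwise_disjoint_on_Ico_succ hne) hg1 hg2
    _ ≤ m + (p - 1) := by
        refine (card_union_le _ _).trans (add_le_add ?_ ?_) <;>
          refine card_image_le.trans ?_ <;> simp

end Overlap

lemma exists_equal_mass_split_range {m B : ℕ} (hB : 0 < B) {u : ℕ → ℝ} (hu0 : ∀ k, 0 ≤ u k)
    (hu1 : ∑ k ∈ range m, u k = 1) :
    ∃ W : Fin B → ℕ → ℝ, (∀ j k, 0 ≤ W j k) ∧ (∀ j, ∑ k ∈ range m, W j k = 1) ∧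
      (∀ k < m, ∑ j, W j k = B * u k) ∧ ∑ j, #{k ∈ range m | 0 < W j k} ≤ m + (B - 1) := by
  set c : ℕ → ℝ := fun k ↦ ∑ l ∈ range k, u l
  set g : ℕ → ℝ := fun j ↦ j / B
  have hB' : (0 : ℝ) < B := by exact_mod_cast hB
  have hc : Monotone c := monotone_nat_of_le_succ fun k ↦ by simp [c, sum_range_succ, hu0 k]
  have hg : Monotone g := fun a b hab ↦ by simp only [g]; gcongr
  have hc0 : c 0 = 0 := sum_range_zero _
  have hg0 : g 0 = 0 := by simp [g]
  refine ⟨fun j k ↦ B * overlap c g k j, fun j k ↦ mul_nonneg hB'.le (overlap_nonneg _ _),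
    fun j ↦ ?_, fun k hk ↦ ?_, ?_⟩
  · have hj : g (j + 1) ≤ c m := by
      simp only [g, c, hu1]; rw [div_le_one hB']; exact_mod_cast j.isLt
    rw [← mul_sum, sum_overlap hc (hg j.1.le_succ) (hc0 ▸ hg0 ▸ hg j.1.zero_le) hj]
    simp only [g]
    field_simp
    push_cast
    ring
  · have hk : c (k + 1) ≤ g B := by
      rw [show g B = c m by simp [g, c, hu1, hB'.ne']]; exact hc hk
    rw [← mul_sum, Fin.sum_univ_eq_sum_range (fun j ↦ overlap c g k j)]
    simp_rw [overlap_comm (f := c)]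
    rw [sum_overlap hg (hc k.le_succ) (hg0 ▸ hc0 ▸ hc k.zero_le) hk]
    simp [c, sum_range_succ]
  · calc ∑ j : Fin B, #{k ∈ range m | 0 < (B : ℝ) * overlap c g k j}
        = ∑ j ∈ range B, ∑ k ∈ range m, if 0 < overlap c g k j then 1 else 0 := by
          rw [← Fin.sum_univ_eq_sum_range]
          simp_rw [card_filter, mul_pos_iff_of_pos_left hB']
      _ = #{q ∈ range m ×ˢ range B | 0 < overlap c g q.1 q.2} := by
          rw [card_filter, sum_product, sum_comm]
      _ ≤ m + (B - 1) := card_overlap_pos_le hc hg (hc0.trans hg0.symm) m B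

lemma exists_equal_mass_split {ι : Type*} {B : ℕ} (hB : 0 < B) {s : Finset ι} {w : ι → ℝ}
    (hw0 : ∀ i ∈ s, 0 ≤ w i) (hw1 : ∑ i ∈ s, w i = 1) :
    ∃ W : Fin B → ι → ℝ, (∀ j i, 0 ≤ W j i) ∧ (∀ j, ∑ i ∈ s, W j i = 1) ∧
      (∀ i ∈ s, ∑ j, W j i = B * w i) ∧ ∑ j, #{i ∈ s | 0 < W j i} ≤ #s + (B - 1) := by
  classical
  set e := s.equivFin
  set idx : ι → ℕ := fun i ↦ if hi : i ∈ s then e ⟨i, hi⟩ else 0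
  set u : ℕ → ℝ := fun k ↦ if hk : k < #s then w (e.symm ⟨k, hk⟩) else 0
  have hreindex : ∀ {M : Type} [AddCommMonoid M] (G : ℕ → M),
      ∑ i ∈ s, G (idx i) = ∑ k ∈ range #s, G k := by
    intro M _ G
    rw [← sum_coe_sort s, ← Fin.sum_univ_eq_sum_range]
    exact Fintype.sum_equiv e _ _ fun i ↦ by simp [idx]
  have hidx : ∀ i ∈ s, idx i < #s ∧ u (idx i) = w i := fun i hi ↦ by simp [idx, u, hi]
  have hu0 : ∀ k, 0 ≤ u k := fun k ↦ by
    simp only [u]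
    split_ifs
    exacts [hw0 _ (e.symm _).2, le_rfl]
  have hu1 : ∑ k ∈ range #s, u k = 1 := by
    rw [← hreindex u, ← hw1]
    exact sum_congr rfl fun i hi ↦ (hidx i hi).2
  obtain ⟨W, hW0, hW1, hWu, hWcard⟩ := exists_equal_mass_split_range hB hu0 hu1
  refine ⟨fun j i ↦ W j (idx i), fun j i ↦ hW0 j _, fun j ↦ (hreindex (W j)).trans (hW1 j),
    fun i hi ↦ by rw [hWu _ (hidx i hi).1, (hidx i hi).2], ?_⟩
  convert hWcard using 2 with j
  rw [card_filter, card_filter, hreindex fun k ↦ if 0 < W j k then 1 else 0]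

lemma sum_le_max_kappaNat_mul {B : ℕ} (hB : 1 < B) {ε : ℝ} (hε : 0 ≤ ε) {N : ℕ} (hN : N ≠ 0)
    (t : Fin B → ℕ) (ht : ∑ j, t j ≤ N) (d : Fin B → ℝ) {T : ℝ} (hdT : ∀ j, d j ≤ T)
    (hd : ∀ j, t j < N → d j ≤ kappaNat B (t j) * ε) :
    ∑ j, d j ≤ max (B * (kappaNat B N - 1) * ε) T := by
  by_cases hfull : ∃ j₀, N ≤ t j₀
  · obtain ⟨j₀, hj₀⟩ := hfull
    have hrest : ∀ j ∈ univ.erase j₀, d j ≤ 0 := by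
      intro j hj
      have : t j + t j₀ ≤ ∑ j, t j :=
        add_le_sum (fun _ _ ↦ Nat.zero_le _) (mem_univ j) (mem_univ j₀) (ne_of_mem_erase hj)
      have htj : t j = 0 := by omega
      simpa [htj] using hd j (by omega)
    calc ∑ j, d j = d j₀ + ∑ j ∈ univ.erase j₀, d j := (add_sum_erase _ _ (mem_univ _)).symm
      _ ≤ T + 0 := add_le_add (hdT j₀) (sum_nonpos hrest)
      _ ≤ _ := by simp
  · push Not at hfull
    calc ∑ j, d j ≤ ∑ j, kappaNat B (t j) * ε := sum_le_sum fun j _ ↦ hd j (hfull j)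
      _ = (∑ j, kappaNat B (t j)) * ε := (sum_mul ..).symm
      _ ≤ B * (kappaNat B N - 1) * ε := by gcongr; exact sum_kappaNat_le hB hN t ht
      _ ≤ _ := le_max_left _ _

lemma le_of_le_max_add_div {a b ε T : ℝ} (hb : 1 < b) (hT : T ≤ max a (ε + T / b))
    (ha : b / (b - 1) * ε ≤ a) : T ≤ a := by
  refine (le_max_iff.1 hT).elim id fun hT ↦ le_trans ?_ ha
  rw [div_mul_eq_mul_div, le_div_iff₀ (by linarith)]
  have := mul_le_mul_of_nonneg_right hT (by linarith : (0 : ℝ) ≤ b)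
  rw [add_mul, div_mul_cancel₀ _ (by positivity)] at this
  linarith

section JensenGap

variable {ι E : Type*} [AddCommGroup E] [Module ℝ E]

noncomputable def jensenGap (h : E → ℝ) (s : Finset ι) (w : ι → ℝ) (p : ι → E) : ℝ :=
  h (∑ i ∈ s, w i • p i) - ∑ i ∈ s, w i * h (p i)

def ApproxConvexOn (B : ℕ) (U : Set E) (ε : ℝ) (h : E → ℝ) : Prop :=
  ∀ y : Fin B → E, (∀ i, y i ∈ U) → h ((B : ℝ)⁻¹ • ∑ i, y i) ≤ ε + (1 / (B : ℝ)) * ∑ i, h (y i)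

variable {h : E → ℝ} {s : Finset ι} {w : ι → ℝ} {p : ι → E}

lemma jensenGap_filter_pos (hw0 : ∀ i ∈ s, 0 ≤ w i) :
    jensenGap h {i ∈ s | 0 < w i} w p = jensenGap h s w p := by
  have hpos : ∀ i ∈ s, w i ≠ 0 → 0 < w i := fun i hi hwi ↦ (hw0 i hi).lt_of_ne' hwi
  rw [jensenGap, sum_filter_of_ne fun i hi hwi ↦ hpos i hi (left_ne_zero_of_smul hwi),
    sum_filter_of_ne fun i hi hwi ↦ hpos i hi (left_ne_zero_of_mul hwi), jensenGap]

lemma jensenGap_eq_zero_of_card_le_one (hw1 : ∑ i ∈ s, w i = 1) (hs : #s ≤ 1) :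
    jensenGap h s w p = 0 := by
  obtain ⟨i, hi⟩ := nonempty_of_sum_ne_zero (hw1 ▸ one_ne_zero)
  obtain rfl : s = {i} := eq_singleton_iff_unique_mem.2 ⟨hi, fun j hj ↦ card_le_one.1 hs j hj i hi⟩
  simp_all [jensenGap]

lemma bddAbove_jensenGap (hs : s.Nonempty) (hbdd : BddAbove (h '' convexHull ℝ (p '' s))) :
    BddAbove {jensenGap h s w p | (w : ι → ℝ) (_ : ∀ i ∈ s, 0 ≤ w i) (_ : ∑ i ∈ s, w i = 1)} := by
  obtain ⟨M, hM⟩ := hbdd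
  refine ⟨M - s.inf' hs (h ∘ p), ?_⟩
  rintro _ ⟨w, hw0, hw1, rfl⟩
  have hmem : ∑ i ∈ s, w i • p i ∈ convexHull ℝ (p '' s) :=
    (convex_convexHull ℝ _).sum_mem hw0 hw1 fun i hi ↦
      subset_convexHull ℝ _ (Set.mem_image_of_mem p hi)
  have hinf : s.inf' hs (h ∘ p) ≤ ∑ i ∈ s, w i * h (p i) :=
    calc s.inf' hs (h ∘ p) = ∑ i ∈ s, w i * s.inf' hs (h ∘ p) := by rw [← sum_mul, hw1, one_mul]
      _ ≤ _ := sum_le_sum fun i hi ↦ mul_le_mul_of_nonneg_left (inf'_le _ hi) (hw0 i hi)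
  have := hM ⟨_, hmem, rfl⟩
  rw [jensenGap]
  linarith

variable {B : ℕ} {U : Set E} {ε : ℝ}

lemma jensenGap_le_of_split (hU : Convex ℝ U) (hB : 0 < B) (hac : ApproxConvexOn B U ε h)
    (hp : ∀ i ∈ s, p i ∈ U) {W : Fin B → ι → ℝ} (hW0 : ∀ j, ∀ i ∈ s, 0 ≤ W j i)
    (hW1 : ∀ j, ∑ i ∈ s, W j i = 1) (hWw : ∀ i ∈ s, ∑ j, W j i = B * w i) :
    jensenGap h s w p ≤ ε + (1 / (B : ℝ)) * ∑ j, jensenGap h s (W j) p := by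
  have hB' : (B : ℝ) ≠ 0 := by positivity
  have hmean : (B : ℝ)⁻¹ • ∑ j, ∑ i ∈ s, W j i • p i = ∑ i ∈ s, w i • p i := by
    rw [sum_comm, smul_sum]
    refine sum_congr rfl fun i hi ↦ ?_
    rw [← sum_smul, hWw i hi, smul_smul, ← mul_assoc, inv_mul_cancel₀ hB', one_mul]
  have hvalues : ∑ j, ∑ i ∈ s, W j i * h (p i) = B * ∑ i ∈ s, w i * h (p i) := by
    rw [sum_comm, mul_sum]
    exact sum_congr rfl fun i hi ↦ by rw [← sum_mul, hWw i hi, mul_assoc]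
  have := hac _ fun j ↦ hU.sum_mem (hW0 j) (hW1 j) hp
  rw [hmean] at this
  simp only [jensenGap, sum_sub_distrib, hvalues, mul_sub] at this ⊢
  field_simp at this ⊢
  linarith

/-- The supports of the `B` pieces have at most `#s + B - 1` points in total: either one piece
has full support (its gap is at most `T`) and the others are single points, or all pieces are
proper subfamilies. -/
lemma jensenGap_le_max (hB : 1 < B) (hU : Convex ℝ U) (hε : 0 ≤ ε)
    (hac : ApproxConvexOn B U ε h)
    (hp : ∀ i ∈ s, p i ∈ U) (hs : 2 ≤ #s)
    (ih : ∀ t ⊂ s, ∀ w : ι → ℝ, (∀ i ∈ t, 0 ≤ w i) → ∑ i ∈ t, w i = 1 →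
      jensenGap h t w p ≤ kappaNat B (#t - 1) * ε)
    {T : ℝ} (hT : ∀ w : ι → ℝ, (∀ i ∈ s, 0 ≤ w i) → ∑ i ∈ s, w i = 1 → jensenGap h s w p ≤ T)
    (hw0 : ∀ i ∈ s, 0 ≤ w i) (hw1 : ∑ i ∈ s, w i = 1) :
    jensenGap h s w p ≤ max (kappaNat B (#s - 1) * ε) (ε + T / B) := by
  classical
  obtain ⟨W, hW0, hW1, hWw, hcard⟩ := exists_equal_mass_split (by omega : 0 < B) hw0 hw1
  set t : Fin B → Finset ι := fun j ↦ {i ∈ s | 0 < W j i}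
  have hWt : ∀ j, ∑ i ∈ t j, W j i = 1 := fun j ↦
    (sum_filter_of_ne fun i _ hi ↦ (hW0 j i).lt_of_ne' hi).trans (hW1 j)
  have ht1 : ∀ j, 1 ≤ #(t j) := fun j ↦
    card_pos.2 (nonempty_of_sum_ne_zero ((hWt j).symm ▸ one_ne_zero))
  have hspare : ∑ j, (#(t j) - 1) ≤ #s - 1 := by
    have hcard : ∑ j, #(t j) ≤ #s + (B - 1) := hcard
    rw [sum_tsub_distrib _ fun j _ ↦ ht1 j]
    simp only [sum_const, card_univ, Fintype.card_fin, smul_eq_mul, mul_one]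
    omega
  have hpieces := sum_le_max_kappaNat_mul hB hε (by omega) _ hspare
    (fun j ↦ jensenGap h s (W j) p) (fun j ↦ hT _ (fun i _ ↦ hW0 j i) (hW1 j)) fun j hj ↦ by
      rw [← jensenGap_filter_pos fun i _ ↦ hW0 j i]
      refine ih _ ((filter_subset _ s).ssubset_of_ne fun heq ↦ ?_) _ (fun i _ ↦ hW0 j i) (hWt j)
      simp only [t, heq] at hj
      omega
  have hB' : (0 : ℝ) < B := by positivity
  calc jensenGap h s w p ≤ ε + (1 / (B : ℝ)) * ∑ j, jensenGap h s (W j) p :=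
        jensenGap_le_of_split hU (by omega) hac hp (fun j i _ ↦ hW0 j i) hW1 hWw
    _ ≤ ε + (1 / (B : ℝ)) * max (B * (kappaNat B (#s - 1) - 1) * ε) T := by gcongr
    _ = max (kappaNat B (#s - 1) * ε) (ε + T / B) := by
        rw [mul_max_of_nonneg _ _ (by positivity), ← max_add_add_left]
        congr 1
        · field_simp
          ring
        · field_simp

theorem jensenGap_le_kappaNat_card (hB : 1 < B) (hU : Convex ℝ U) (hε : 0 ≤ ε)
    (hbdd : ∀ t : Set E, t.Finite → t ⊆ U → BddAbove (h '' convexHull ℝ t))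
    (hac : ApproxConvexOn B U ε h)
    (hp : ∀ i ∈ s, p i ∈ U) (hw0 : ∀ i ∈ s, 0 ≤ w i) (hw1 : ∑ i ∈ s, w i = 1) :
    jensenGap h s w p ≤ kappaNat B (#s - 1) * ε := by
  induction s using Finset.strongInduction generalizing w with
  | H s ih =>
  rcases le_or_gt #s 1 with hs | hs
  · rw [jensenGap_eq_zero_of_card_le_one hw1 hs, Nat.sub_eq_zero_of_le hs, kappaNat_zero, zero_mul]
  set S := {jensenGap h s w p | (w : ι → ℝ) (_ : ∀ i ∈ s, 0 ≤ w i) (_ : ∑ i ∈ s, w i = 1)}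
  have hS : BddAbove S := bddAbove_jensenGap (card_pos.1 (by omega))
    (hbdd _ (s.finite_toSet.image p) (Set.image_subset_iff.2 hp))
  have hsup : sSup S ≤ kappaNat B (#s - 1) * ε := by
    refine le_of_le_max_add_div (b := B) (ε := ε) (by exact_mod_cast hB)
      (csSup_le ⟨_, w, hw0, hw1, rfl⟩ ?_) ?_
    · rintro _ ⟨w', hw'0, hw'1, rfl⟩
      exact jensenGap_le_max hB hU hε hac hp (by omega)
        (fun t hts w ↦ ih t hts (fun i hi ↦ hp i (hts.subset hi)))
        (fun w hw0 hw1 ↦ le_csSup hS ⟨w, hw0, hw1, rfl⟩) hw'0 hw'1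
    · rw [← kappaNat_one hB]
      gcongr
      exact kappaNat_mono hB (by omega)
  exact (le_csSup hS ⟨w, hw0, hw1, rfl⟩).trans hsup

end JensenGap

lemma convexOn_sInf_fiber {E : Type*} [AddCommGroup E] [Module ℝ E] {C : Set (E × ℝ)}
    (hC : Convex ℝ C) {U : Set E} (hU : Convex ℝ U) (hne : ∀ z ∈ U, ∃ r, (z, r) ∈ C)
    (hbdd : ∀ z ∈ U, BddBelow {r | (z, r) ∈ C}) :
    ConvexOn ℝ U fun z ↦ sInf {r | (z, r) ∈ C} := by
  refine ⟨hU, fun z₁ hz₁ z₂ hz₂ a b ha hb hab ↦ ?_⟩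
  set F : E → Set ℝ := fun z ↦ {r | (z, r) ∈ C}
  have hsub : a • F z₁ + b • F z₂ ⊆ F (a • z₁ + b • z₂) := by
    rintro _ ⟨_, ⟨r₁, hr₁, rfl⟩, _, ⟨r₂, hr₂, rfl⟩, rfl⟩
    simpa [F] using hC hr₁ hr₂ ha hb hab
  obtain ⟨r₁, hr₁⟩ : (F z₁).Nonempty := hne z₁ hz₁
  obtain ⟨r₂, hr₂⟩ : (F z₂).Nonempty := hne z₂ hz₂
  calc sInf (F (a • z₁ + b • z₂)) ≤ sInf (a • F z₁ + b • F z₂) :=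
        csInf_le_csInf (hbdd _ (hU hz₁ hz₂ ha hb hab))
          ⟨_, Set.add_mem_add (Set.smul_mem_smul_set hr₁) (Set.smul_mem_smul_set hr₂)⟩ hsub
    _ = a • sInf (F z₁) + b • sInf (F z₂) := by
        rw [csInf_add ⟨_, Set.smul_mem_smul_set hr₁⟩ ((hbdd z₁ hz₁).smul_of_nonneg ha)
          ⟨_, Set.smul_mem_smul_set hr₂⟩ ((hbdd z₂ hz₂).smul_of_nonneg hb),
          Real.sInf_smul_of_nonneg ha, Real.sInf_smul_of_nonneg hb]

section FiniteDimensional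

variable {ι E : Type*} [AddCommGroup E] [Module ℝ E] [FiniteDimensional ℝ E]

lemma exists_relation_of_finrank_add_one_lt {s : Finset ι} (p : ι → E)
    (hs : finrank ℝ E + 1 < #s) :
    ∃ f : ι → ℝ, ∑ i ∈ s, f i • p i = 0 ∧ ∑ i ∈ s, f i = 0 ∧ ∃ i ∈ s, f i ≠ 0 := by
  classical
  by_cases hinj : Set.InjOn p s
  · obtain ⟨g, hgp, hg1, x, hx, hgx⟩ :=
      Module.exists_nontrivial_relation_sum_zero_of_finrank_succ_lt_card (R := ℝ) (t := s.image p)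
        (by rwa [card_image_of_injOn hinj])
    obtain ⟨i, hi, rfl⟩ := mem_image.1 hx
    rw [sum_image hinj] at hgp hg1
    exact ⟨g ∘ p, hgp, hg1, i, hi, hgx⟩
  · obtain ⟨i, hi, j, hj, hpij, hij⟩ : ∃ i ∈ s, ∃ j ∈ s, p i = p j ∧ i ≠ j := by
      simpa [Set.InjOn] using hinj
    refine ⟨Pi.single i 1 - Pi.single j 1, ?_, ?_, i, hi, by simp [hij]⟩
    · simp [sub_smul, sum_sub_distrib, Pi.single_apply, ite_smul, hi, hj, hpij]
    · simp [sum_sub_distrib, hi, hj]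

/-- Carathéodory's step: move `w` along an affine relation of the `pᵢ` until a weight vanishes,
in the direction in which `∑ wᵢ vᵢ` does not increase. -/
lemma exists_erase_of_finrank_add_one_lt [DecidableEq ι] {s : Finset ι} (p : ι → E) (v : ι → ℝ)
    (hs : finrank ℝ E + 1 < #s) {w : ι → ℝ} (hw0 : ∀ i ∈ s, 0 ≤ w i) (hw1 : ∑ i ∈ s, w i = 1) :
    ∃ i₀ ∈ s, ∃ w' : ι → ℝ, (∀ i ∈ s.erase i₀, 0 ≤ w' i) ∧ ∑ i ∈ s.erase i₀, w' i = 1 ∧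
      ∑ i ∈ s.erase i₀, w' i • p i = ∑ i ∈ s, w i • p i ∧
      ∑ i ∈ s.erase i₀, w' i * v i ≤ ∑ i ∈ s, w i * v i := by
  obtain ⟨f, hfp, hf1, hf0⟩ := exists_relation_of_finrank_add_one_lt p hs
  obtain ⟨g, hgp, hg1, hgv, hgpos⟩ : ∃ g : ι → ℝ, ∑ i ∈ s, g i • p i = 0 ∧ ∑ i ∈ s, g i = 0 ∧
      0 ≤ ∑ i ∈ s, g i * v i ∧ ∃ i ∈ s, 0 < g i := by
    rcases le_total 0 (∑ i ∈ s, f i * v i) with hfv | hfv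
    · exact ⟨f, hfp, hf1, hfv, exists_pos_of_sum_zero_of_exists_nonzero f hf1 hf0⟩
    · refine ⟨-f, by simp [hfp], by simp [hf1], by simpa using hfv,
        exists_pos_of_sum_zero_of_exists_nonzero _ (by simp [hf1]) (by simpa using hf0)⟩
  obtain ⟨i₀, hi₀, hmin⟩ := exists_min_image {i ∈ s | 0 < g i} (fun i ↦ w i / g i)
    (let ⟨i, hi, hgi⟩ := hgpos; ⟨i, mem_filter.2 ⟨hi, hgi⟩⟩)
  obtain ⟨hi₀s, hgi₀⟩ := mem_filter.1 hi₀
  set θ := w i₀ / g i₀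
  have hθ : 0 ≤ θ := div_nonneg (hw0 _ hi₀s) hgi₀.le
  set w' : ι → ℝ := fun i ↦ w i - θ * g i
  have hzero : w' i₀ = 0 := by simp only [w', θ, div_mul_cancel₀ _ hgi₀.ne', sub_self]
  refine ⟨i₀, hi₀s, w', fun i hi ↦ ?_, ?_, ?_, ?_⟩
  · have hi := mem_of_mem_erase hi
    rcases le_or_gt (g i) 0 with hgi | hgi
    · nlinarith [hw0 i hi]
    · have := hmin i (mem_filter.2 ⟨hi, hgi⟩)
      rw [le_div_iff₀ hgi] at this
      linarith
  · rw [sum_erase s hzero, sum_sub_distrib, ← mul_sum, hg1, mul_zero, sub_zero, hw1]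
  · rw [sum_erase s (f := fun i ↦ w' i • p i) (by simp [hzero])]
    simp only [w', sub_smul, mul_smul, sum_sub_distrib, ← smul_sum, hgp, smul_zero, sub_zero]
  · rw [sum_erase s (f := fun i ↦ w' i * v i) (by simp [hzero])]
    simp only [w', sub_mul, mul_assoc, sum_sub_distrib, ← mul_sum]
    nlinarith

variable {h : E → ℝ} {B : ℕ} {U : Set E} {ε : ℝ}

theorem jensenGap_le_kappaNat_finrank (hB : 1 < B) (hU : Convex ℝ U) (hε : 0 ≤ ε)
    (hbdd : ∀ t : Set E, t.Finite → t ⊆ U → BddAbove (h '' convexHull ℝ t))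
    (hac : ApproxConvexOn B U ε h)
    {s : Finset ι} {w : ι → ℝ} {p : ι → E} (hp : ∀ i ∈ s, p i ∈ U) (hw0 : ∀ i ∈ s, 0 ≤ w i)
    (hw1 : ∑ i ∈ s, w i = 1) :
    jensenGap h s w p ≤ kappaNat B (finrank ℝ E) * ε := by
  classical
  induction s using Finset.strongInduction generalizing w with
  | H s ih =>
  rcases le_or_gt #s (finrank ℝ E + 1) with hs | hs
  · exact (jensenGap_le_kappaNat_card hB hU hε hbdd hac hp hw0 hw1).trans
      (mul_le_mul_of_nonneg_right (kappaNat_mono hB (by omega)) hε)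
  obtain ⟨i₀, hi₀, w', hw'0, hw'1, hw'p, hw'v⟩ :=
    exists_erase_of_finrank_add_one_lt p (h ∘ p) hs hw0 hw1
  calc jensenGap h s w p ≤ jensenGap h (s.erase i₀) w' p := by
        simp only [jensenGap, hw'p]
        exact sub_le_sub_left hw'v _
    _ ≤ _ := ih _ (erase_ssubset hi₀) (fun i hi ↦ hp i (mem_of_mem_erase hi)) hw'0 hw'1

theorem le_add_of_mem_convexHull_graph (hB : 1 < B) (hU : Convex ℝ U) (hε : 0 ≤ ε)
    (hbdd : ∀ t : Set E, t.Finite → t ⊆ U → BddAbove (h '' convexHull ℝ t))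
    (hac : ApproxConvexOn B U ε h)
    {z : E} {r : ℝ} (hzr : (z, r) ∈ convexHull ℝ ((fun x ↦ (x, h x)) '' U)) :
    h z ≤ kappaNat B (finrank ℝ E) * ε + r := by
  obtain ⟨ι, _, w, q, hw0, hw1, hq, hwq⟩ := mem_convexHull_iff_exists_fintype.1 hzr
  choose p hp hpq using hq
  have hz : ∑ i, w i • p i = z := by
    simpa [← hpq, Prod.fst_sum] using congr_arg Prod.fst hwq
  have hr : ∑ i, w i * h (p i) = r := by
    simpa [← hpq, Prod.snd_sum] using congr_arg Prod.snd hwq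
  have := jensenGap_le_kappaNat_finrank hB hU hε hbdd hac (s := univ) (fun i _ ↦ hp i)
    (fun i _ ↦ hw0 i) hw1
  rw [jensenGap, hz, hr] at this
  linarith

theorem exists_convexOn_le_le_add (hB : 1 < B) (hU : Convex ℝ U) (hε : 0 ≤ ε)
    (hbdd : ∀ t : Set E, t.Finite → t ⊆ U → BddAbove (h '' convexHull ℝ t))
    (hac : ApproxConvexOn B U ε h) :
    ∃ g : E → ℝ, ConvexOn ℝ U g ∧
      ∀ x ∈ U, g x ≤ h x ∧ h x ≤ g x + kappaNat B (finrank ℝ E) * ε := by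
  set C := convexHull ℝ ((fun x ↦ (x, h x)) '' U)
  have hmem : ∀ z ∈ U, (z, h z) ∈ C := fun z hz ↦ subset_convexHull ℝ _ ⟨z, hz, rfl⟩
  have hlow : ∀ z, ∀ r ∈ {r | (z, r) ∈ C}, h z - kappaNat B (finrank ℝ E) * ε ≤ r :=
    fun z r hzr ↦ by linarith [le_add_of_mem_convexHull_graph hB hU hε hbdd hac hzr]
  refine ⟨_, convexOn_sInf_fiber (convex_convexHull ℝ _) hU (fun z hz ↦ ⟨_, hmem z hz⟩)
    fun z _ ↦ ⟨_, hlow z⟩, fun z hz ↦ ⟨csInf_le ⟨_, hlow z⟩ (hmem z hz), ?_⟩⟩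
  linarith [le_csInf ⟨h z, hmem z hz⟩ (hlow z)]

end FiniteDimensional

theorem stmt9_general (B n : ℕ) (hB : 2 ≤ B)
    (U : Set (Fin n → ℝ)) (hUconv : Convex ℝ U)
    (ε : ℝ) (hε : 0 < ε) (h : (Fin n → ℝ) → ℝ)
    (hbdd : ∀ K ⊆ U, IsCompact K → ∃ M : ℝ, ∀ x ∈ K, h x ≤ M)
    (hac : ∀ y : Fin B → (Fin n → ℝ), (∀ i, y i ∈ U) →
      h ((B : ℝ)⁻¹ • ∑ i, y i) ≤ ε + (1 / (B : ℝ)) * ∑ i, h (y i)) :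
    (∃ g : (Fin n → ℝ) → ℝ, ConvexOn ℝ U g ∧
      ∀ x ∈ U, h x ≤ g x ∧ g x ≤ h x + kappa B n * ε) ∧
    (∃ g₀ : (Fin n → ℝ) → ℝ, ConvexOn ℝ U g₀ ∧
      ∀ x ∈ U, |h x - g₀ x| ≤ (kappa B n / 2) * ε) := by
  have hbdd' : ∀ t : Set (Fin n → ℝ), t.Finite → t ⊆ U → BddAbove (h '' convexHull ℝ t) :=
    fun t ht htU ↦
      let ⟨M, hM⟩ := hbdd _ (convexHull_min htU hUconv) (ht.isCompact_convexHull ℝ)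
      ⟨M, Set.forall_mem_image.2 hM⟩
  obtain ⟨g, hg, hgh⟩ := exists_convexOn_le_le_add hB hUconv hε.le hbdd' hac
  have hκ : kappaNat B (finrank ℝ (Fin n → ℝ)) * ε ≤ kappa B n * ε := by
    rw [finrank_fin_fun]
    exact mul_le_mul_of_nonneg_right (kappaNat_le_kappa hB n) hε.le
  refine ⟨⟨g + fun _ ↦ kappa B n * ε, hg.add_const _, fun x hx ↦ ?_⟩,
    ⟨g + fun _ ↦ kappa B n / 2 * ε, hg.add_const _, fun x hx ↦ ?_⟩⟩
  · simp only [Pi.add_apply]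
    constructor <;> linarith [hgh x hx]
  · simp only [Pi.add_apply, abs_le]
    constructor <;> linarith [hgh x hx]

theorem stmt9 (B n : ℕ) (hB : 2 ≤ B) (hn : 1 ≤ n)
    (U : Set (Fin n → ℝ)) (hUconv : Convex ℝ U)
    (ε : ℝ) (hε : 0 < ε) (h : (Fin n → ℝ) → ℝ)
    (hbdd : ∀ K ⊆ U, IsCompact K → ∃ M : ℝ, ∀ x ∈ K, h x ≤ M)
    (hac : ∀ y : Fin B → (Fin n → ℝ), (∀ i, y i ∈ U) →
      h ((B : ℝ)⁻¹ • ∑ i, y i) ≤ ε + (1 / (B : ℝ)) * ∑ i, h (y i)) :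
    (∃ g : (Fin n → ℝ) → ℝ, ConvexOn ℝ U g ∧
      ∀ x ∈ U, h x ≤ g x ∧ g x ≤ h x + kappa B n * ε) ∧
    (∃ g₀ : (Fin n → ℝ) → ℝ, ConvexOn ℝ U g₀ ∧
      ∀ x ∈ U, |h x - g₀ x| ≤ (kappa B n / 2) * ε) :=
  stmt9_general B n hB U hUconv ε hε h hbdd hac
end

section
/- Let B ≥ 2 be an integer and x ∈ [0,1]. (i) For every sequence (y_i)_{i≥0} of nonnegative integers such that ∑_{i=0}^∞ y_i/B^i = x and ∑_{i=0}^∞ i·y_i/B^i converges, one has H_B(x) ≤ ∑_{i=0}^∞ i·y_i/B^i. (ii) If moreover y_i ≤ B−1 for all i and y_i < B−1 for infinitely many i, then H_B(x) = ∑_{i=0}^∞ i·y_i/B^i. -/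
open scoped BigOperators

/-! Write `x = ∑ᵢ yᵢ / Bⁱ` and let `Tₖ = ∑_{i > k} yᵢ / Bⁱ`. In `Bᵏ x` the digits up to `k`
contribute an integer, so `{Bᵏ x} = {Bᵏ Tₖ} ≤ Bᵏ Tₖ`, i.e. the `k`-th term of `H_B(x)` is at most
`Tₖ`, with equality when `Bᵏ Tₖ < 1`; for a proper expansion (digits `≤ B - 1`, infinitely many
`< B - 1`) this holds because `0.(B-1)(B-1)… = 1`. Finally `∑ₖ Tₖ = ∑ᵢ i yᵢ / Bⁱ`. -/

open Finset

theorem summable_of_summable_natCast_mul {c : ℕ → ℝ} (hc : ∀ i, 0 ≤ c i)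
    (h : Summable fun i : ℕ => (i : ℝ) * c i) : Summable c := by
  refine (summable_nat_add_iff 1).1 <|
    ((summable_nat_add_iff 1).2 h).of_nonneg_of_le (fun i => hc _) fun i => ?_
  exact le_mul_of_one_le_left (hc _) (by simp)

theorem hasSum_tsum_tails {c : ℕ → ℝ} (hc : ∀ i, 0 ≤ c i)
    (h : Summable fun i : ℕ => (i : ℝ) * c i) :
    HasSum (fun k => ∑' j, c (j + (k + 1))) (∑' i : ℕ, (i : ℝ) * c i) := by
  -- `g (i, k) = cᵢ` for `k < i`: its rows sum to `i cᵢ` and its columns to the tails.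
  set g : ℕ × ℕ → ℝ := fun p => if p.2 < p.1 then c p.1 else 0 with hg
  have hg0 : 0 ≤ g := fun p => by by_cases hp : p.2 < p.1 <;> simp [hg, hp, hc]
  have hrow : ∀ i, HasSum (fun k => g (i, k)) (i * c i) := by
    intro i
    have hfin : (i : ℝ) * c i = ∑ k ∈ range i, g (i, k) := by
      simp +contextual [hg, sum_ite_of_true]
    rw [hfin]
    refine hasSum_sum_of_ne_finset_zero fun k hk => ?_
    simp only [mem_range, not_lt] at hk
    simp [hg, hk]
  have hsum : Summable g := (summable_prod_of_nonneg hg0).2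
    ⟨fun i => (hrow i).summable, by simpa only [(hrow _).tsum_eq] using h⟩
  have hcol : ∀ k, HasSum (fun i => g (i, k)) (∑' j, c (j + (k + 1))) := by
    intro k
    rw [← hasSum_nat_add_iff' (k + 1)]
    have hlow : ∑ i ∈ range (k + 1), g (i, k) = 0 :=
      sum_eq_zero fun i hi => by simp [hg, Nat.lt_succ_iff.1 (mem_range.1 hi)]
    have hhigh : (fun j => g (j + (k + 1), k)) = fun j => c (j + (k + 1)) := by
      ext j; simp only [hg, ite_eq_left_iff, not_lt]; omega
    rw [hlow, sub_zero, hhigh]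
    exact ((summable_nat_add_iff (k + 1)).2 (summable_of_summable_natCast_mul hc h)).hasSum
  rw [(hsum.hasSum.prod_fiberwise hrow).tsum_eq]
  exact ((Equiv.prodComm ℕ ℕ).hasSum_iff.2 hsum.hasSum).prod_fiberwise hcol

section Digits

variable {B : ℕ} {y : ℕ → ℕ}

theorem fract_pow_mul_tsum_digits (hB : B ≠ 0)
    (hy : Summable fun i => (y i : ℝ) / (B : ℝ) ^ i) (k : ℕ) :
    Int.fract ((B : ℝ) ^ k * ∑' i, (y i : ℝ) / (B : ℝ) ^ i) =
      Int.fract ((B : ℝ) ^ k * ∑' j, (y (j + (k + 1)) : ℝ) / (B : ℝ) ^ (j + (k + 1))) := by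
  have hhead : (B : ℝ) ^ k * ∑ i ∈ range (k + 1), (y i : ℝ) / (B : ℝ) ^ i =
      ((∑ i ∈ range (k + 1), y i * B ^ (k - i) : ℕ) : ℝ) := by
    push_cast
    rw [mul_sum]
    refine sum_congr rfl fun i hi => ?_
    rw [← Nat.sub_add_cancel (Nat.lt_succ_iff.1 (mem_range.1 hi)), pow_add, Nat.add_sub_cancel]
    field_simp
  rw [← hy.sum_add_tsum_nat_add (k + 1), mul_add, hhead, Int.fract_natCast_add]

theorem pow_mul_tsum_digits_tail (hB : B ≠ 0) (k : ℕ) :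
    (B : ℝ) ^ k * ∑' j, (y (j + (k + 1)) : ℝ) / (B : ℝ) ^ (j + (k + 1)) =
      ∑' j, (y (j + (k + 1)) : ℝ) / (B : ℝ) ^ (j + 1) := by
  rw [← tsum_mul_left]
  refine tsum_congr fun j => ?_
  rw [show j + (k + 1) = j + 1 + k by omega, pow_add]
  field_simp

theorem tsum_digits_div_pow_succ_lt_one (hB : 1 < B) {d : ℕ → ℕ}
    (hd : ∀ j, d j ≤ B - 1) (hlt : ∃ j, d j < B - 1) :
    ∑' j, (d j : ℝ) / (B : ℝ) ^ (j + 1) < 1 := by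
  obtain ⟨j₀, hj₀⟩ := hlt
  have hlast := Real.ofDigits_const_last_eq_one' hB
  have hsum := Real.summable_ofDigitsTerm
    (digits := fun _ => (⟨B - 1, Nat.sub_one_lt_of_lt hB⟩ : Fin B))
  simp only [Real.ofDigits, Real.ofDigitsTerm, ← div_eq_mul_inv] at hlast hsum
  rw [← hlast]
  refine Summable.tsum_lt_tsum_of_nonneg (i := j₀) (fun j => by positivity) (fun j => ?_) ?_ hsum
  · gcongr; exact_mod_cast hd j
  · gcongr

theorem fract_pow_mul_tsum_digits_div_pow_le_tail (hB : B ≠ 0)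
    (hy : Summable fun i => (y i : ℝ) / (B : ℝ) ^ i) (k : ℕ) :
    Int.fract ((B : ℝ) ^ k * ∑' i, (y i : ℝ) / (B : ℝ) ^ i) / (B : ℝ) ^ k ≤
      ∑' j, (y (j + (k + 1)) : ℝ) / (B : ℝ) ^ (j + (k + 1)) := by
  have htail : 0 ≤ (B : ℝ) ^ k * ∑' j, (y (j + (k + 1)) : ℝ) / (B : ℝ) ^ (j + (k + 1)) := by
    positivity
  rw [fract_pow_mul_tsum_digits hB hy k, div_le_iff₀' (by positivity)]
  exact sub_le_self _ (Int.cast_nonneg (Int.floor_nonneg.2 htail))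

theorem fract_pow_mul_tsum_digits_div_pow_eq_tail (hB : 1 < B)
    (hy : Summable fun i => (y i : ℝ) / (B : ℝ) ^ i) (hd : ∀ i, y i ≤ B - 1)
    (hinf : {i | y i < B - 1}.Infinite) (k : ℕ) :
    Int.fract ((B : ℝ) ^ k * ∑' i, (y i : ℝ) / (B : ℝ) ^ i) / (B : ℝ) ^ k =
      ∑' j, (y (j + (k + 1)) : ℝ) / (B : ℝ) ^ (j + (k + 1)) := by
  have hB0 : B ≠ 0 := by omega
  have hlt : ∃ j, y (j + (k + 1)) < B - 1 := by
    obtain ⟨i, hi, hik⟩ := hinf.exists_gt k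
    exact ⟨i - (k + 1), by rwa [Nat.sub_add_cancel hik]⟩
  have htail := tsum_digits_div_pow_succ_lt_one hB (fun j => hd (j + (k + 1))) hlt
  rw [fract_pow_mul_tsum_digits hB0 hy k, Int.fract_eq_self.2, mul_div_cancel_left₀]
  · positivity
  · rw [pow_mul_tsum_digits_tail hB0]
    exact ⟨by positivity, htail⟩

theorem HB_tsum_digits_le (hB : B ≠ 0)
    (hS : Summable fun i : ℕ => (i : ℝ) * ((y i : ℝ) / (B : ℝ) ^ i)) :
    HB B (∑' i, (y i : ℝ) / (B : ℝ) ^ i) ≤ ∑' i : ℕ, (i : ℝ) * ((y i : ℝ) / (B : ℝ) ^ i) := by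
  have hT := hasSum_tsum_tails (fun i => by positivity) hS
  have hy := summable_of_summable_natCast_mul (fun i => by positivity) hS
  have hle := fract_pow_mul_tsum_digits_div_pow_le_tail hB hy
  rw [← hT.tsum_eq]
  exact (hT.summable.of_nonneg_of_le (fun k => by positivity) hle).tsum_le_tsum hle hT.summable

theorem HB_tsum_digits_eq (hB : 1 < B)
    (hS : Summable fun i : ℕ => (i : ℝ) * ((y i : ℝ) / (B : ℝ) ^ i))
    (hd : ∀ i, y i ≤ B - 1) (hinf : {i | y i < B - 1}.Infinite) :
    HB B (∑' i, (y i : ℝ) / (B : ℝ) ^ i) = ∑' i : ℕ, (i : ℝ) * ((y i : ℝ) / (B : ℝ) ^ i) := by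
  have hy := summable_of_summable_natCast_mul (fun i => by positivity) hS
  rw [← (hasSum_tsum_tails (fun i => by positivity) hS).tsum_eq]
  exact tsum_congr (fract_pow_mul_tsum_digits_div_pow_eq_tail hB hy hd hinf)

end Digits

theorem stmt14_general (B : ℕ) (hB : 2 ≤ B) (x : ℝ) :
    (∀ y : ℕ → ℕ, (∑' i : ℕ, (y i : ℝ) / (B : ℝ) ^ i) = x →
      Summable (fun i : ℕ => (i : ℝ) * (y i : ℝ) / (B : ℝ) ^ i) →
      HB B x ≤ ∑' i : ℕ, (i : ℝ) * (y i : ℝ) / (B : ℝ) ^ i) ∧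
    (∀ y : ℕ → ℕ, (∑' i : ℕ, (y i : ℝ) / (B : ℝ) ^ i) = x →
      Summable (fun i : ℕ => (i : ℝ) * (y i : ℝ) / (B : ℝ) ^ i) →
      (∀ i, y i ≤ B - 1) → {i : ℕ | y i < B - 1}.Infinite →
      HB B x = ∑' i : ℕ, (i : ℝ) * (y i : ℝ) / (B : ℝ) ^ i) := by
  simp only [mul_div_assoc]
  refine ⟨fun y hx hS => ?_, fun y hx hS hd hinf => ?_⟩ <;> subst hx
  · exact HB_tsum_digits_le (by omega) hS
  · exact HB_tsum_digits_eq hB hS hd hinf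

theorem stmt14 (B : ℕ) (hB : 2 ≤ B) (x : ℝ) (hx : x ∈ Set.Icc (0 : ℝ) 1) :
    (∀ y : ℕ → ℕ, (∑' i : ℕ, (y i : ℝ) / (B : ℝ) ^ i) = x →
      Summable (fun i : ℕ => (i : ℝ) * (y i : ℝ) / (B : ℝ) ^ i) →
      HB B x ≤ ∑' i : ℕ, (i : ℝ) * (y i : ℝ) / (B : ℝ) ^ i) ∧
    (∀ y : ℕ → ℕ, (∑' i : ℕ, (y i : ℝ) / (B : ℝ) ^ i) = x →
      Summable (fun i : ℕ => (i : ℝ) * (y i : ℝ) / (B : ℝ) ^ i) →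
      (∀ i, y i ≤ B - 1) → {i : ℕ | y i < B - 1}.Infinite →
      HB B x = ∑' i : ℕ, (i : ℝ) * (y i : ℝ) / (B : ℝ) ^ i) :=
  stmt14_general B hB x
end

section
/- Let B ≥ 2 be an integer. Then for every x ∈ (0,1], x·log_B(1/x) ≤ H_B(x) ≤ Bx/(B−1) + x·log_B(1/x), and H_B(0) = 0. -/
/-!
The first `n = ⌈log_B (1/x)⌉` terms of the series equal `x`, since `B^k x < 1` there; this gives
the lower bound `n x ≥ x log_B (1/x)`. The remaining terms are at most `B^{-k}`, so the tail is at
most `B^{-n} · B/(B-1) = x B^{-t} · B/(B-1)` with `t = n - log_B (1/x) ∈ [0, 1]`, and Bernoulli's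
inequality `B^{-t} ≤ 1 - t (1 - 1/B)` makes the excess `t x` of `n x` over `x log_B (1/x)` cancel.
-/

open Real Finset

lemma Real.rpow_neg_le_one_sub_mul {b t : ℝ} (hb : 0 < b) (ht₀ : 0 ≤ t) (ht₁ : t ≤ 1) :
    b ^ (-t) ≤ 1 - t * (1 - b⁻¹) := by
  have h := rpow_one_add_le_one_add_mul_self (s := b⁻¹ - 1) (by linarith [inv_pos.2 hb]) ht₀ ht₁
  rw [add_sub_cancel, inv_rpow hb.le, ← rpow_neg hb.le] at h
  linarith

noncomputable def fractTerm (b x : ℝ) (k : ℕ) : ℝ :=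
  Int.fract (b ^ k * x) / b ^ k

lemma HB_eq_tsum_fractTerm (B : ℕ) (x : ℝ) : HB B x = ∑' k, fractTerm B x k := rfl

section fractTerm

variable {b x : ℝ}

lemma fractTerm_nonneg (hb : 0 < b) (x : ℝ) (k : ℕ) : 0 ≤ fractTerm b x k :=
  div_nonneg (Int.fract_nonneg _) (by positivity)

lemma fractTerm_le_inv_pow (hb : 0 < b) (x : ℝ) (k : ℕ) : fractTerm b x k ≤ b⁻¹ ^ k := by
  rw [fractTerm, inv_pow, div_eq_mul_inv, mul_comm]
  exact mul_le_of_le_one_right (by positivity) (Int.fract_lt_one _).le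

lemma summable_fractTerm (hb : 1 < b) (x : ℝ) : Summable (fractTerm b x) :=
  (summable_geometric_of_lt_one (by positivity) (inv_lt_one_of_one_lt₀ hb)).of_nonneg_of_le
    (fractTerm_nonneg (by linarith) x) (fractTerm_le_inv_pow (by linarith) x)

lemma fractTerm_eq_of_pow_mul_lt_one (hb : 0 < b) (hx : 0 ≤ x) {k : ℕ} (h : b ^ k * x < 1) :
    fractTerm b x k = x := by
  rw [fractTerm, Int.fract_eq_self.2 ⟨by positivity, h⟩]
  field_simp

lemma tsum_fractTerm_nat_add_le (hb : 1 < b) (x : ℝ) (n : ℕ) :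
    ∑' i, fractTerm b x (i + n) ≤ b⁻¹ ^ n * (b / (b - 1)) := by
  have hr₀ : 0 ≤ b⁻¹ := by positivity
  have hr₁ : b⁻¹ < 1 := inv_lt_one_of_one_lt₀ hb
  have hgeom := summable_geometric_of_lt_one hr₀ hr₁
  calc ∑' i, fractTerm b x (i + n) ≤ ∑' i, b⁻¹ ^ (i + n) :=
        ((summable_nat_add_iff n).2 (summable_fractTerm hb x)).tsum_le_tsum
          (fun i => fractTerm_le_inv_pow (by linarith) x (i + n)) ((summable_nat_add_iff n).2 hgeom)
    _ = b⁻¹ ^ n * (1 - b⁻¹)⁻¹ := by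
        simp only [pow_add]
        rw [tsum_mul_right, tsum_geometric_of_lt_one hr₀ hr₁, mul_comm]
    _ = b⁻¹ ^ n * (b / (b - 1)) := by
        have : b - 1 ≠ 0 := by linarith
        field_simp

lemma pow_mul_lt_one_of_lt_ceil_logb (hb : 1 < b) (hx : 0 < x) {k : ℕ}
    (hk : k < ⌈logb b (1 / x)⌉₊) : b ^ k * x < 1 := by
  have h := (lt_logb_iff_rpow_lt hb (by positivity)).1 (Nat.lt_ceil.1 hk)
  rw [rpow_natCast] at h
  calc b ^ k * x < 1 / x * x := by gcongr
    _ = 1 := by field_simp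

lemma sum_range_ceil_logb_fractTerm (hb : 1 < b) (hx : 0 < x) :
    ∑ k ∈ range ⌈logb b (1 / x)⌉₊, fractTerm b x k = ⌈logb b (1 / x)⌉₊ * x := by
  rw [sum_congr rfl fun k hk => fractTerm_eq_of_pow_mul_lt_one (by linarith) hx.le
    (pow_mul_lt_one_of_lt_ceil_logb hb hx (mem_range.1 hk))]
  simp

theorem mul_logb_le_tsum_fractTerm (hb : 1 < b) (hx : 0 < x) :
    x * logb b (1 / x) ≤ ∑' k, fractTerm b x k := by
  have hsum := (summable_fractTerm hb x).sum_le_tsum (range ⌈logb b (1 / x)⌉₊)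
    (fun k _ => fractTerm_nonneg (by linarith) x k)
  rw [sum_range_ceil_logb_fractTerm hb hx] at hsum
  have hceil := Nat.le_ceil (logb b (1 / x))
  nlinarith

theorem tsum_fractTerm_le (hb : 1 < b) (hx₀ : 0 < x) (hx₁ : x ≤ 1) :
    ∑' k, fractTerm b x k ≤ b * x / (b - 1) + x * logb b (1 / x) := by
  set L := logb b (1 / x)
  set n := ⌈L⌉₊
  have hL : 0 ≤ L := logb_nonneg hb (one_le_one_div hx₀ hx₁)
  have hnL : L ≤ n := Nat.le_ceil L
  have hnL' : (n : ℝ) ≤ L + 1 := (Nat.ceil_lt_add_one hL).le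
  have hpow : b⁻¹ ^ n = x * b ^ (-(n - L)) := by
    rw [neg_sub, rpow_sub (by linarith), rpow_logb (by linarith) hb.ne' (by positivity),
      rpow_natCast, inv_pow]
    field_simp
  have hb₁ : 0 < b - 1 := by linarith
  have hbern := rpow_neg_le_one_sub_mul (b := b) (by linarith) (sub_nonneg.2 hnL) (by linarith)
  have htail : ∑' i, fractTerm b x (i + n) ≤ x * (1 - (n - L) * (1 - b⁻¹)) * (b / (b - 1)) :=
    calc _ ≤ b⁻¹ ^ n * (b / (b - 1)) := tsum_fractTerm_nat_add_le hb x n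
      _ = x * b ^ (-(n - L)) * (b / (b - 1)) := by rw [hpow]
      _ ≤ _ := by gcongr
  have hcollapse :
      x * (1 - (n - L) * (1 - b⁻¹)) * (b / (b - 1)) = b * x / (b - 1) - (n - L) * x := by
    field_simp
  rw [← (summable_fractTerm hb x).sum_add_tsum_nat_add n, sum_range_ceil_logb_fractTerm hb hx₀]
  linarith

end fractTerm

theorem stmt16 (B : ℕ) (hB : 2 ≤ B) :
    (∀ x ∈ Set.Ioc (0 : ℝ) 1,
      x * Real.logb B (1 / x) ≤ HB B x ∧
        HB B x ≤ (B : ℝ) * x / ((B : ℝ) - 1) + x * Real.logb B (1 / x)) ∧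
    HB B 0 = 0 := by
  have hB : 1 < (B : ℝ) := by exact_mod_cast hB
  refine ⟨fun x ⟨hx₀, hx₁⟩ => ?_, by simp [HB]⟩
  rw [HB_eq_tsum_fractTerm]
  exact ⟨mul_logb_le_tsum_fractTerm hB hx₀, tsum_fractTerm_le hB hx₀ hx₁⟩
end

section
/- Let B ≥ 2 be an integer. The restriction of H_B to [0,1] is lower semicontinuous; H_B is right-continuous at every point of [0,1); and H_B is continuous at every point of [0,1] that is not a B-adic rational, i.e., not of the form j/B^l with j, l nonnegative integers. -/
open Filter Set Topology

/-- `Int.fract` is lower semicontinuous on `ℝ`. -/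
lemma fract_lsc17 : LowerSemicontinuous (Int.fract : ℝ → ℝ) := by
  intro y c hc
  by_cases h : y = ⌊y⌋
  · have h0 : Int.fract y = 0 := by rw [h, Int.fract_intCast]
    rw [h0] at hc
    filter_upwards with z using lt_of_lt_of_le hc (Int.fract_nonneg z)
  · exact ((continuousAt_fract h).eventually (eventually_gt_nhds hc))

/-- `Int.fract` is right-continuous everywhere. -/
lemma fract_cwa17 (y : ℝ) : ContinuousWithinAt Int.fract (Ici y) y := by
  by_cases h : y = ⌊y⌋
  · have h0 : Int.fract y = 0 := by rw [h, Int.fract_intCast]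
    unfold ContinuousWithinAt
    rw [h0, h]
    exact tendsto_fract_right' (⌊y⌋)
  · exact (continuousAt_fract h).continuousWithinAt

lemma unifCWA17 {F : ℕ → ℝ → ℝ} {f : ℝ → ℝ} {s : Set ℝ} {x : ℝ} (hx : x ∈ s)
    (h : TendstoUniformly F f atTop) (hc : ∀ n, ContinuousWithinAt (F n) s x) :
    ContinuousWithinAt f s x := by
  apply continuousWithinAt_of_locally_uniform_approx_of_continuousWithinAt hx
  intro u hu
  obtain ⟨n, hn⟩ := (h u hu).exists
  exact ⟨s, self_mem_nhdsWithin, F n, hc n, fun y _ => hn y⟩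

lemma unifCA17 {F : ℕ → ℝ → ℝ} {f : ℝ → ℝ} {x : ℝ}
    (h : TendstoUniformly F f atTop) (hc : ∀ n, ContinuousAt (F n) x) :
    ContinuousAt f x := by
  apply continuousAt_of_locally_uniform_approx_of_continuousAt
  intro u hu
  obtain ⟨n, hn⟩ := (h u hu).exists
  exact ⟨Set.univ, Filter.univ_mem, F n, hc n, fun y _ => hn y⟩

theorem stmt17 (B : ℕ) (hB : 2 ≤ B) :
    LowerSemicontinuousOn (HB B) (Set.Icc (0 : ℝ) 1) ∧
    (∀ x ∈ Set.Ico (0 : ℝ) 1, ContinuousWithinAt (HB B) (Set.Ici x) x) ∧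
    (∀ x ∈ Set.Icc (0 : ℝ) 1, (¬ ∃ j l : ℕ, x = (j : ℝ) / (B : ℝ) ^ l) →
      ContinuousAt (HB B) x) := by
  set f : ℕ → ℝ → ℝ := fun k x => Int.fract ((B : ℝ) ^ k * x) / (B : ℝ) ^ k with hf
  have hB1 : (1 : ℝ) < (B : ℝ) := by
    have : (2 : ℝ) ≤ (B : ℝ) := by exact_mod_cast hB
    linarith
  have hBpos : ∀ k : ℕ, (0 : ℝ) < (B : ℝ) ^ k := fun k => pow_pos (by linarith) k
  have hf_nonneg : ∀ k x, 0 ≤ f k x := fun k x =>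
    div_nonneg (Int.fract_nonneg _) (hBpos k).le
  have hf_le : ∀ k x, f k x ≤ ((B : ℝ)⁻¹) ^ k := by
    intro k x
    have h1 : f k x ≤ 1 / (B : ℝ) ^ k := by
      rw [hf, div_le_div_iff₀ (hBpos k) (hBpos k)]
      have := (Int.fract_lt_one ((B : ℝ) ^ k * x)).le
      nlinarith [hBpos k]
    rw [inv_pow]
    simpa [one_div] using h1
  have hsum_geom : Summable (fun k : ℕ => ((B : ℝ)⁻¹) ^ k) :=
    summable_geometric_of_lt_one (by positivity) (by
      rw [inv_lt_one_iff₀]; right; exact hB1)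
  have hsummable : ∀ x, Summable (fun k => f k x) := fun x =>
    Summable.of_nonneg_of_le (fun k => hf_nonneg k x) (fun k => hf_le k x) hsum_geom
  have hHB : HB B = fun x => ∑' k, f k x := rfl
  have hunif : TendstoUniformly (fun N x => ∑ k ∈ Finset.range N, f k x) (HB B) atTop := by
    rw [hHB]
    apply tendstoUniformly_tsum_nat hsum_geom
    intro k x
    rw [Real.norm_eq_abs, abs_of_nonneg (hf_nonneg k x)]
    exact hf_le k x
  -- right-continuity of each term
  have hfk_cwa : ∀ k x, ContinuousWithinAt (f k) (Ici x) x := by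
    intro k x
    have h1 : ContinuousWithinAt Int.fract (Ici ((B : ℝ) ^ k * x)) ((B : ℝ) ^ k * x) :=
      fract_cwa17 _
    have h2 : ContinuousWithinAt (fun t => (B : ℝ) ^ k * t) (Ici x) x :=
      (continuous_const.mul continuous_id).continuousWithinAt
    have h3 := h1.comp h2 (fun t ht => mul_le_mul_of_nonneg_left ht (hBpos k).le)
    exact h3.div_const _
  have hS_cwa : ∀ N x, ContinuousWithinAt (fun t => ∑ k ∈ Finset.range N, f k t) (Ici x) x :=
    fun N x => tendsto_finset_sum _ (fun k _ => hfk_cwa k x)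
  refine ⟨?_, ?_, ?_⟩
  · -- lower semicontinuity
    intro x hx c hc
    have htend : Tendsto (fun N => ∑ k ∈ Finset.range N, f k x) atTop (𝓝 (HB B x)) :=
      (hsummable x).hasSum.tendsto_sum_nat
    obtain ⟨N, hN⟩ := (htend.eventually (eventually_gt_nhds hc)).exists
    have hSlsc : LowerSemicontinuousWithinAt (fun t => ∑ k ∈ Finset.range N, f k t)
        (Icc (0 : ℝ) 1) x := by
      apply lowerSemicontinuousWithinAt_sum
      intro k _
      intro d hd
      have hd' : d * (B : ℝ) ^ k < Int.fract ((B : ℝ) ^ k * x) :=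
        (lt_div_iff₀ (hBpos k)).mp hd
      have hev := fract_lsc17 ((B : ℝ) ^ k * x) _ hd'
      have htends : Tendsto (fun t => (B : ℝ) ^ k * t) (𝓝[Icc (0 : ℝ) 1] x)
          (𝓝 ((B : ℝ) ^ k * x)) :=
        ((continuous_const.mul continuous_id).tendsto x).mono_left nhdsWithin_le_nhds
      filter_upwards [htends.eventually hev] with y hy
      exact (lt_div_iff₀ (hBpos k)).mpr hy
    filter_upwards [hSlsc _ hN] with y hy
    exact hy.trans_le (Summable.sum_le_tsum (Finset.range N) (fun k _ => hf_nonneg k y) (hsummable y))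
  · -- right continuity
    intro x _hx
    exact unifCWA17 self_mem_Ici hunif (fun N => hS_cwa N x)
  · -- continuity at non B-adic points
    intro x hx hnot
    have hne : ∀ k : ℕ, (B : ℝ) ^ k * x ≠ (⌊(B : ℝ) ^ k * x⌋ : ℝ) := by
      intro k hEq
      apply hnot
      have hnn : (0 : ℝ) ≤ (B : ℝ) ^ k * x := mul_nonneg (hBpos k).le hx.1
      have hfl : (0 : ℤ) ≤ ⌊(B : ℝ) ^ k * x⌋ := Int.floor_nonneg.mpr hnn
      refine ⟨(⌊(B : ℝ) ^ k * x⌋).toNat, k, ?_⟩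
      have : ((⌊(B : ℝ) ^ k * x⌋.toNat : ℤ) : ℝ) = (⌊(B : ℝ) ^ k * x⌋ : ℝ) := by
        rw [Int.toNat_of_nonneg hfl]
      push_cast at this ⊢
      rw [this, ← hEq]
      field_simp
    have hfk_ca : ∀ k, ContinuousAt (f k) x := by
      intro k
      have h1 : ContinuousAt Int.fract ((B : ℝ) ^ k * x) := continuousAt_fract (hne k)
      have h2 : ContinuousAt (fun t => (B : ℝ) ^ k * t) x :=
        (continuous_const.mul continuous_id).continuousAt
      exact (h1.comp h2).div_const _
    exact unifCA17 hunif (fun N => tendsto_finset_sum _ (fun k _ => hfk_ca k))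
end
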